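/- arXiv:math/9810154 — 13 statements merged into one kernel-verified Lean document; each statement's English description precedes it below -/
import Mathlib

section
/- The sequence g_2(n) satisfies the linear recurrence g_2(n) = 5·g_2(n-1) − 5·g_2(n-2) for all n ≥ 4, with initial values g_2(2) = 3 and g_2(3) = 10. -/
/-- `g t n` is the number of `n × n` matrices of nonnegative integers whose
`(i,j)` entry is `0` whenever `j ≥ i + 2` (`0`-based indices) and all of whose
row sums and column sums equal `t`. -/
noncomputable def g (t n : ℕ) : ℕ :=
  Set.ncard {M : Matrix (Fin n) (Fin n) ℕ |
    (∀ i j : Fin n, (i : ℕ) + 2 ≤ (j : ℕ) → M i j = 0) ∧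
    (∀ i : Fin n, ∑ j, M i j = t) ∧
    (∀ j : Fin n, ∑ i, M i j = t)}

/-!
Build the matrix row by row. The first `k` rows only reach the columns `0, …, k`, and since
every row sums to `2` while no column may exceed `2`, these columns fall short of `2` by a total
of exactly `2`: either one column is still empty, or two columns hold one unit each. In the
first case the next row can be completed in `3` ways, `2` of which again leave an empty column;
in the second case in `4` ways, only `1` of which leaves an empty column. So if `T k` counts the
`k`-row partial matrices and `E k` those with an empty column, then `T (k + 1) = 4 T k - E k`
and `E (k + 1) = T k + E k`; eliminating `E` gives `T (k + 2) = 5 T (k + 1) - 5 T k`. The last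
row of a full matrix is forced, so `g 2 (k + 1) = T k`.
-/

open Finset Function

lemma Finset.sum_eq_two_cases {ι : Type*} [DecidableEq ι] {s : Finset ι} {d : ι → ℕ}
    (h : ∑ j ∈ s, d j = 2) :
    (∃ a ∈ s, ∀ j ∈ s, d j = if j = a then 2 else 0) ∨
      ∃ a ∈ s, ∃ b ∈ s, a ≠ b ∧ ∀ j ∈ s, d j = if j = a ∨ j = b then 1 else 0 := by
  obtain ⟨a, ha, hda⟩ := exists_ne_zero_of_sum_ne_zero (h.symm ▸ two_ne_zero : ∑ j ∈ s, d j ≠ 0)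
  have hrest : d a + ∑ j ∈ s.erase a, d j = 2 := by rw [add_sum_erase s d ha, h]
  by_cases h2 : d a = 2
  · refine Or.inl ⟨a, ha, fun j hj => ?_⟩
    split_ifs with hja
    · rw [hja, h2]
    · exact sum_eq_zero_iff.1 (by omega) j (mem_erase.2 ⟨hja, hj⟩)
  · obtain ⟨b, hb, hdb⟩ :=
      exists_ne_zero_of_sum_ne_zero (s := s.erase a) (f := d) (by omega)
    have hrest' := add_sum_erase _ d hb
    obtain ⟨hba, hbs⟩ := mem_erase.1 hb
    refine Or.inr ⟨a, ha, b, hbs, hba.symm, fun j hj => ?_⟩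
    split_ifs with hj'
    · rcases hj' with rfl | rfl <;> omega
    · exact sum_eq_zero_iff.1 (by omega) j
        (mem_erase.2 ⟨fun h => hj' (Or.inr h), mem_erase.2 ⟨fun h => hj' (Or.inl h), hj⟩⟩)

namespace StaircaseMatrix

variable {t k : ℕ} {f M : ℕ → ℕ → ℕ} {r : ℕ → ℕ}

def colSum (k : ℕ) (f : ℕ → ℕ → ℕ) (j : ℕ) : ℕ := ∑ i ∈ range k, f i j

lemma colSum_succ (f : ℕ → ℕ → ℕ) (j : ℕ) : colSum (k + 1) f j = colSum k f j + f k j :=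
  sum_range_succ _ _

lemma colSum_update_self (f : ℕ → ℕ → ℕ) (r : ℕ → ℕ) (j : ℕ) :
    colSum k (update f k r) j = colSum k f j :=
  sum_congr rfl fun i hi => by rw [update_of_ne (mem_range.1 hi).ne]

lemma colSum_succ_update (f : ℕ → ℕ → ℕ) (r : ℕ → ℕ) (j : ℕ) :
    colSum (k + 1) (update f k r) j = colSum k f j + r j := by
  rw [colSum_succ, colSum_update_self, update_self]

/-- The first `k` rows of a matrix as in `g t n`, extended by zero; they only reach the columns
`0, …, k`. -/
def partialFillings (t k : ℕ) : Set (ℕ → ℕ → ℕ) :=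
  {f | (∀ i j, k ≤ i ∨ i + 2 ≤ j → f i j = 0) ∧
    (∀ i < k, ∑ j ∈ range (k + 1), f i j = t) ∧ ∀ j ≤ k, colSum k f j ≤ t}

def nextRows (t k : ℕ) (M : ℕ → ℕ → ℕ) : Set (ℕ → ℕ) :=
  {r | (∀ j, k + 2 ≤ j → r j = 0) ∧ ∑ j ∈ range (k + 2), r j = t ∧
    ∀ j ≤ k, colSum k M j + r j ≤ t}

lemma apply_le_of_mem_partialFillings (hf : f ∈ partialFillings t k) (i j : ℕ) : f i j ≤ t := by
  obtain ⟨hzero, hrow, -⟩ := hf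
  by_cases h : i < k ∧ j < k + 1
  · exact (hrow i h.1).symm ▸ single_le_sum (fun _ _ => Nat.zero_le _) (mem_range.2 h.2)
  · rw [hzero i j (by omega)]
    exact Nat.zero_le _

lemma partialFillings_finite (t k : ℕ) : (partialFillings t k).Finite := by
  refine (Set.finite_range fun v : Fin k → Fin (k + 1) → Fin (t + 1) =>
    fun i j => if h : i < k ∧ j < k + 1 then (v ⟨i, h.1⟩ ⟨j, h.2⟩ : ℕ) else 0).subset ?_
  intro f hf
  refine ⟨fun i j => ⟨f i j, Nat.lt_succ_of_le (apply_le_of_mem_partialFillings hf i j)⟩, ?_⟩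
  funext i j
  dsimp only
  split_ifs with h
  · rfl
  · exact (hf.1 i j (by omega)).symm

lemma colSum_eq_zero_of_lt (hf : f ∈ partialFillings t k) {j : ℕ} (hj : k < j) :
    colSum k f j = 0 :=
  sum_eq_zero fun i hi => hf.1 i j (Or.inr (by have := mem_range.1 hi; omega))

lemma sum_sub_colSum (hf : f ∈ partialFillings t k) :
    ∑ j ∈ range (k + 1), (t - colSum k f j) = t := by
  have htotal : ∑ j ∈ range (k + 1), colSum k f j = k * t := by
    unfold colSum
    rw [sum_comm, sum_congr rfl fun i hi => hf.2.1 i (mem_range.1 hi), sum_const, card_range,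
      smul_eq_mul]
  have hsplit : ∑ j ∈ range (k + 1), (t - colSum k f j) + ∑ j ∈ range (k + 1), colSum k f j =
      (k + 1) * t := by
    rw [← sum_add_distrib, sum_congr rfl fun j hj => Nat.sub_add_cancel
      (hf.2.2 j (Nat.lt_succ_iff.1 (mem_range.1 hj))), sum_const, card_range, smul_eq_mul]
  rw [htotal] at hsplit
  linarith

lemma update_mem_partialFillings_succ_iff (hM : M ∈ partialFillings t k) :
    update M k r ∈ partialFillings t (k + 1) ↔ r ∈ nextRows t k M := by
  obtain ⟨hzero, hrow, hcol⟩ := hM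
  constructor
  · rintro ⟨hzero', hrow', hcol'⟩
    refine ⟨fun j hj => ?_, ?_, fun j hj => ?_⟩
    · simpa using hzero' k j (Or.inr hj)
    · simpa using hrow' k (Nat.lt_succ_self k)
    · simpa [colSum_succ_update] using hcol' j (by omega)
  · rintro ⟨hzero', hrow', hcol'⟩
    refine ⟨fun i j hij => ?_, fun i hi => ?_, fun j hj => ?_⟩
    · rcases eq_or_ne i k with rfl | hik
      · simpa using hzero' j (by omega)
      · rw [update_of_ne hik]
        exact hzero i j (by omega)
    · rcases eq_or_ne i k with rfl | hik
      · simpa using hrow'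
      · rw [sum_range_succ]
        simp only [update_of_ne hik]
        rw [hrow i (by omega), hzero i (k + 1) (Or.inr (by omega)), add_zero]
    · rw [colSum_succ_update]
      rcases Nat.lt_or_ge k j with hkj | hjk
      · rw [colSum_eq_zero_of_lt ⟨hzero, hrow, hcol⟩ hkj, zero_add, ← hrow']
        exact single_le_sum (fun _ _ => Nat.zero_le _) (mem_range.2 (by omega))
      · exact hcol' j hjk

lemma update_zero_mem_partialFillings (hf : f ∈ partialFillings t (k + 1)) :
    update f k 0 ∈ partialFillings t k := by
  obtain ⟨hzero, hrow, hcol⟩ := hf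
  refine ⟨fun i j hij => ?_, fun i hi => ?_, fun j hj => ?_⟩
  · rcases eq_or_ne i k with rfl | hik
    · simp
    · rw [update_of_ne hik]
      exact hzero i j (by omega)
  · have h := hrow i (by omega)
    rw [sum_range_succ, hzero i (k + 1) (Or.inr (by omega)), add_zero] at h
    simpa [update_of_ne hi.ne] using h
  · have h := hcol j (by omega)
    rw [← update_eq_self k f, ← update_idem (0 : ℕ → ℕ) (f k) f, colSum_succ_update] at h
    omega

lemma ncard_sep_partialFillings_succ (P : (ℕ → ℕ → ℕ) → Prop) :
    {f ∈ partialFillings t (k + 1) | P f}.ncard =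
      ∑ M ∈ (partialFillings_finite t k).toFinset,
        {r ∈ nextRows t k M | P (update M k r)}.ncard := by
  classical
  have hfin : {f ∈ partialFillings t (k + 1) | P f}.Finite :=
    (partialFillings_finite t (k + 1)).subset fun _ hf => hf.1
  rw [Set.ncard_eq_toFinset_card _ hfin, card_eq_sum_card_fiberwise (f := fun f => update f k 0)
    (t := (partialFillings_finite t k).toFinset)
    fun f hf => by simpa using update_zero_mem_partialFillings (by simpa using hf : _ ∧ _).1]
  refine sum_congr rfl fun M hM => ?_
  rw [Set.Finite.mem_toFinset] at hM
  rw [← Set.ncard_coe_finset, ← (update_injective M k).injOn.ncard_image]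
  congr 1
  ext f
  simp only [coe_filter, Set.Finite.mem_toFinset, Set.mem_ofPred_eq, Set.mem_image]
  constructor
  · rintro ⟨⟨hf, hP⟩, rfl⟩
    have hself : update (update f k 0) k (f k) = f := by rw [update_idem, update_eq_self]
    refine ⟨f k, ⟨?_, by rwa [hself]⟩, hself⟩
    rwa [← update_mem_partialFillings_succ_iff (update_zero_mem_partialFillings hf), hself]
  · rintro ⟨r, ⟨hr, hP⟩, rfl⟩
    refine ⟨⟨(update_mem_partialFillings_succ_iff hM).2 hr, hP⟩, ?_⟩
    rw [update_idem, update_eq_self_iff]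
    exact funext fun j => (hM.1 k j (Or.inl le_rfl)).symm

/-- The matrices counted by `g t n`, extended by zero to `ℕ × ℕ`. -/
def fillings (t n : ℕ) : Set (ℕ → ℕ → ℕ) :=
  {f | (∀ i j, n ≤ i ∨ n ≤ j ∨ i + 2 ≤ j → f i j = 0) ∧
    (∀ i < n, ∑ j ∈ range n, f i j = t) ∧ ∀ j < n, colSum n f j = t}

def extendByZero {n : ℕ} (M : Matrix (Fin n) (Fin n) ℕ) : ℕ → ℕ → ℕ :=
  fun i j => if h : i < n ∧ j < n then M ⟨i, h.1⟩ ⟨j, h.2⟩ else 0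

lemma extendByZero_apply {n : ℕ} (M : Matrix (Fin n) (Fin n) ℕ) (i j : Fin n) :
    extendByZero M i j = M i j := by
  simp [extendByZero]

lemma extendByZero_injective {n : ℕ} : Injective (extendByZero (n := n)) := fun M N h =>
  Matrix.ext fun i j => by simpa only [extendByZero_apply] using congrFun (congrFun h i) j

lemma image_extendByZero (t n : ℕ) :
    extendByZero '' {M : Matrix (Fin n) (Fin n) ℕ |
      (∀ i j : Fin n, (i : ℕ) + 2 ≤ (j : ℕ) → M i j = 0) ∧
      (∀ i : Fin n, ∑ j, M i j = t) ∧ (∀ j : Fin n, ∑ i, M i j = t)} = fillings t n := by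
  ext f
  constructor
  · rintro ⟨M, ⟨hstair, hrow, hcol⟩, rfl⟩
    refine ⟨fun i j hij => ?_, fun i hi => ?_, fun j hj => ?_⟩
    · unfold extendByZero
      split_ifs with h
      · exact hstair _ _ (by simp only; omega)
      · rfl
    · rw [← hrow ⟨i, hi⟩, ← Fin.sum_univ_eq_sum_range]
      exact sum_congr rfl fun j _ => extendByZero_apply M ⟨i, hi⟩ j
    · rw [← hcol ⟨j, hj⟩, colSum, ← Fin.sum_univ_eq_sum_range]
      exact sum_congr rfl fun i _ => extendByZero_apply M i ⟨j, hj⟩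
  · rintro ⟨hzero, hrow, hcol⟩
    refine ⟨Matrix.of fun i j => f i j, ⟨fun i j hij => hzero i j (Or.inr (Or.inr hij)),
      fun i => ?_, fun j => ?_⟩, ?_⟩
    · simpa only [Matrix.of_apply, Fin.sum_univ_eq_sum_range (f i)] using hrow i i.2
    · simpa only [Matrix.of_apply, colSum, Fin.sum_univ_eq_sum_range (f · j)] using hcol j j.2
    · funext i j
      unfold extendByZero
      split_ifs with h
      · rfl
      · exact (hzero i j (by omega)).symm

lemma g_eq_ncard_fillings (t n : ℕ) : g t n = (fillings t n).ncard := by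
  rw [g, ← Set.ncard_image_of_injective _ extendByZero_injective, image_extendByZero]

lemma fillings_subset_partialFillings : fillings t (k + 1) ⊆ partialFillings t (k + 1) := by
  rintro f ⟨hzero, hrow, hcol⟩
  refine ⟨fun i j h => hzero i j (by omega), fun i hi => ?_, fun j hj => ?_⟩
  · rw [sum_range_succ, hrow i hi, hzero i (k + 1) (by omega), add_zero]
  · rcases Nat.lt_or_ge j (k + 1) with hj' | hj'
    · exact (hcol j hj').le
    · rw [colSum, sum_eq_zero fun i _ => hzero i j (by omega)]
      exact Nat.zero_le t

lemma sep_nextRows_mem_fillings (hM : M ∈ partialFillings t k) :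
    {r ∈ nextRows t k M | update M k r ∈ fillings t (k + 1)} =
      {fun j => if j ≤ k then t - colSum k M j else 0} := by
  ext r
  simp only [Set.mem_ofPred_eq, Set.mem_singleton_iff]
  constructor
  · rintro ⟨-, hzero, -, hcol⟩
    funext j
    split_ifs with hj
    · have := hcol j (by omega)
      rw [colSum_succ_update] at this
      omega
    · simpa using hzero k j (Or.inr (Or.inl (by omega)))
  · rintro rfl
    have hsum : ∑ j ∈ range (k + 1), (if j ≤ k then t - colSum k M j else 0) = t := by
      refine (sum_congr rfl fun j hj => ?_).trans (sum_sub_colSum hM)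
      exact if_pos (Nat.lt_succ_iff.1 (mem_range.1 hj))
    have hle := hM.2.2
    refine ⟨⟨fun j hj => if_neg (by omega), ?_, fun j hj => ?_⟩, fun i j hij => ?_,
      fun i hi => ?_, fun j hj => ?_⟩
    · rw [sum_range_succ, hsum, if_neg (by omega), add_zero]
    · dsimp only
      rw [if_pos hj]
      have := hle j hj
      omega
    · rcases eq_or_ne i k with rfl | hik
      · rw [update_self, if_neg (by omega)]
      · rw [update_of_ne hik]
        exact hM.1 i j (by omega)
    · rcases eq_or_ne i k with rfl | hik
      · simpa using hsum
      · simp only [update_of_ne hik]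
        exact hM.2.1 i (by omega)
    · rw [colSum_succ_update, if_pos (by omega)]
      have := hle j (by omega)
      omega

lemma ncard_fillings_succ (t k : ℕ) :
    (fillings t (k + 1)).ncard = (partialFillings t k).ncard := by
  have h := ncard_sep_partialFillings_succ (t := t) (k := k) (· ∈ fillings t (k + 1))
  rw [Set.sep_mem_eq, Set.inter_eq_right.2 fillings_subset_partialFillings] at h
  rw [h, sum_congr rfl fun M hM => by
      rw [sep_nextRows_mem_fillings ((Set.Finite.mem_toFinset _).1 hM), Set.ncard_singleton],
    sum_const, smul_eq_mul, mul_one, Set.ncard_eq_toFinset_card _ (partialFillings_finite t k)]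

lemma eq_of_mem_nextRows {r' : ℕ → ℕ} (hr : r ∈ nextRows t k M) (hr' : r' ∈ nextRows t k M)
    (h : ∀ j ≤ k, r j = r' j) : r = r' := by
  have hinit : ∑ j ∈ range (k + 1), r j = ∑ j ∈ range (k + 1), r' j :=
    sum_congr rfl fun j hj => h j (Nat.lt_succ_iff.1 (mem_range.1 hj))
  have hlast := hr.2.1.trans hr'.2.1.symm
  rw [sum_range_succ _ (k + 1), sum_range_succ _ (k + 1), hinit, add_right_inj] at hlast
  funext j
  rcases Nat.lt_or_ge k j with hkj | hjk
  · rcases (Nat.succ_le_of_lt hkj).eq_or_lt with rfl | hj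
    · exact hlast
    · rw [hr.1 j hj, hr'.1 j hj]
  · exact h j hjk

def HasEmptyColumn (k : ℕ) (f : ℕ → ℕ → ℕ) : Prop := ∃ j ≤ k, colSum k f j = 0

instance (k : ℕ) (f : ℕ → ℕ → ℕ) : Decidable (HasEmptyColumn k f) :=
  inferInstanceAs (Decidable (∃ j ≤ k, colSum k f j = 0))

lemma hasEmptyColumn_update_iff (hM : M ∈ partialFillings t k) :
    HasEmptyColumn (k + 1) (update M k r) ↔ r (k + 1) = 0 ∨ ∃ j ≤ k, colSum k M j + r j = 0 := by
  simp only [HasEmptyColumn, colSum_succ_update]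
  constructor
  · rintro ⟨j, hj, h⟩
    rcases (Nat.le_succ_iff.1 hj) with hjk | rfl
    · exact Or.inr ⟨j, hjk, h⟩
    · rw [colSum_eq_zero_of_lt hM (Nat.lt_succ_self k), zero_add] at h
      exact Or.inl h
  · rintro (h | ⟨j, hj, h⟩)
    · exact ⟨k + 1, le_rfl, by rw [colSum_eq_zero_of_lt hM (Nat.lt_succ_self k), h]⟩
    · exact ⟨j, by omega, h⟩

lemma colSum_cases (hM : M ∈ partialFillings 2 k) :
    (∃ a ≤ k, ∀ j ≤ k, colSum k M j = if j = a then 0 else 2) ∨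
      ∃ a ≤ k, ∃ b ≤ k, a ≠ b ∧ ∀ j ≤ k, colSum k M j = if j = a ∨ j = b then 1 else 2 := by
  have hle : ∀ j ≤ k, colSum k M j ≤ 2 := hM.2.2
  rcases sum_eq_two_cases (sum_sub_colSum hM) with ⟨a, ha, hd⟩ | ⟨a, ha, b, hb, hab, hd⟩
  · refine Or.inl ⟨a, Nat.lt_succ_iff.1 (mem_range.1 ha), fun j hj => ?_⟩
    have := hd j (mem_range.2 (Nat.lt_succ_of_le hj))
    have := hle j hj
    split_ifs at * <;> omega
  · refine Or.inr ⟨a, Nat.lt_succ_iff.1 (mem_range.1 ha), b, Nat.lt_succ_iff.1 (mem_range.1 hb),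
      hab, fun j hj => ?_⟩
    have := hd j (mem_range.2 (Nat.lt_succ_of_le hj))
    have := hle j hj
    split_ifs at * <;> omega

lemma single_add_single_mem_nextRows {a c : ℕ} (ha : a ≤ k)
    (hcol : ∀ j ≤ k, colSum k M j = if j = a then 0 else 2) (hc : c < 3) :
    Pi.single a c + Pi.single (k + 1) (2 - c) ∈ nextRows 2 k M := by
  have hak : a ≠ k + 1 := by omega
  refine ⟨fun j hj => ?_, ?_, fun j hj => ?_⟩
  · simp [show j ≠ a by omega, show j ≠ k + 1 by omega]
  · simp only [Pi.add_apply, sum_add_distrib, sum_pi_single', mem_range]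
    split_ifs <;> omega
  · rw [hcol j hj]
    by_cases hja : j = a
    · simp only [hja, ↓reduceIte, Pi.add_apply, Pi.single_eq_same, ne_eq, hak,
        not_false_eq_true, Pi.single_eq_of_ne, add_zero, zero_add]
      omega
    · simp [hja, show j ≠ k + 1 by omega]

lemma nextRows_eq_image_of_emptyColumn {a : ℕ} (ha : a ≤ k)
    (hcol : ∀ j ≤ k, colSum k M j = if j = a then 0 else 2) :
    nextRows 2 k M = (fun c => Pi.single a c + Pi.single (k + 1) (2 - c)) '' ↑(range 3) := by
  have hak : a ≠ k + 1 := by omega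
  have hmem := fun c => single_add_single_mem_nextRows (c := c) ha hcol
  ext r
  refine ⟨fun hr => ?_, fun ⟨c, hc, hr⟩ => hr ▸ hmem c (by simpa using hc)⟩
  have hra : r a < 3 := by
    have := hr.2.2 a ha
    rw [hcol a ha, if_pos rfl] at this
    omega
  refine ⟨r a, by simpa using hra, eq_of_mem_nextRows (hmem _ hra) hr fun j hj => ?_⟩
  by_cases hja : j = a
  · simp [hja, hak]
  · have := hr.2.2 j hj
    rw [hcol j hj, if_neg hja] at this
    simp only [Pi.add_apply, ne_eq, hja, not_false_eq_true, Pi.single_eq_of_ne,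
      show j ≠ k + 1 by omega, add_zero]
    omega

lemma ncard_nextRows_of_emptyColumn {a : ℕ} (ha : a ≤ k)
    (hcol : ∀ j ≤ k, colSum k M j = if j = a then 0 else 2) :
    (nextRows 2 k M).ncard = 3 := by
  have hak : a ≠ k + 1 := by omega
  rw [nextRows_eq_image_of_emptyColumn ha hcol,
    Set.ncard_image_of_injective _ fun c c' h => by simpa [hak] using congrFun h a,
    Set.ncard_coe_finset, card_range]

lemma ncard_sep_nextRows_of_emptyColumn {a : ℕ} (hM : M ∈ partialFillings 2 k) (ha : a ≤ k)
    (hcol : ∀ j ≤ k, colSum k M j = if j = a then 0 else 2) :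
    {r ∈ nextRows 2 k M | HasEmptyColumn (k + 1) (update M k r)}.ncard = 2 := by
  have hak : a ≠ k + 1 := by omega
  have hempty : ∀ c < 3, HasEmptyColumn (k + 1)
      (update M k (Pi.single a c + Pi.single (k + 1) (2 - c))) ↔ c = 0 ∨ c = 2 := by
    intro c hc
    rw [hasEmptyColumn_update_iff hM]
    simp only [Pi.add_apply, Pi.single_eq_same, Pi.single_eq_of_ne hak.symm, zero_add,
      Nat.add_eq_zero_iff]
    constructor
    · rintro (h | ⟨j, hj, h0, hc0, -⟩)
      · omega
      · rw [hcol j hj] at h0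
        split_ifs at h0 with hja
        · subst hja
          simp only [Pi.single_eq_same] at hc0
          exact Or.inl hc0
    · rintro (rfl | rfl)
      · exact Or.inr ⟨a, ha, by simp [hcol a ha, hak]⟩
      · exact Or.inl rfl
  have hset : {r ∈ nextRows 2 k M | HasEmptyColumn (k + 1) (update M k r)} =
      (fun c => Pi.single a c + Pi.single (k + 1) (2 - c)) '' ↑({0, 2} : Finset ℕ) := by
    rw [nextRows_eq_image_of_emptyColumn ha hcol]
    ext r
    constructor
    · rintro ⟨⟨c, hc, rfl⟩, hP⟩
      exact ⟨c, by simpa using (hempty c (by simpa using hc)).1 hP, rfl⟩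
    · rintro ⟨c, hc, rfl⟩
      have hc' : c = 0 ∨ c = 2 := by simpa using hc
      exact ⟨⟨c, by simp only [coe_range, Set.mem_Iio]; omega, rfl⟩, (hempty c (by omega)).2 hc'⟩
  rw [hset, Set.ncard_image_of_injective _ fun c c' h => by simpa [hak] using congrFun h a,
    Set.ncard_coe_finset]
  rfl

lemma single_add_single_add_single_mem_nextRows {a b x y : ℕ} (ha : a ≤ k) (hb : b ≤ k)
    (hab : a ≠ b) (hcol : ∀ j ≤ k, colSum k M j = if j = a ∨ j = b then 1 else 2) (hx : x < 2)
    (hy : y < 2) :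
    Pi.single a x + Pi.single b y + Pi.single (k + 1) (2 - x - y) ∈ nextRows 2 k M := by
  have hak : a ≠ k + 1 := by omega
  have hbk : b ≠ k + 1 := by omega
  refine ⟨fun j hj => ?_, ?_, fun j hj => ?_⟩
  · simp [show j ≠ a by omega, show j ≠ b by omega, show j ≠ k + 1 by omega]
  · simp only [Pi.add_apply, sum_add_distrib, sum_pi_single', mem_range]
    split_ifs <;> omega
  · rw [hcol j hj]
    by_cases hja : j = a
    · simp only [hja, hab, or_false, ↓reduceIte, Pi.add_apply, Pi.single_eq_same, ne_eq,
        not_false_eq_true, Pi.single_eq_of_ne, add_zero, hak]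
      omega
    · by_cases hjb : j = b
      · simp only [hjb, hab.symm, or_true, ↓reduceIte, Pi.add_apply, ne_eq, not_false_eq_true,
          Pi.single_eq_of_ne, Pi.single_eq_same, zero_add, hbk, add_zero]
        omega
      · simp [hja, hjb, show j ≠ k + 1 by omega]

lemma nextRows_eq_image_of_halfColumns {a b : ℕ} (ha : a ≤ k) (hb : b ≤ k) (hab : a ≠ b)
    (hcol : ∀ j ≤ k, colSum k M j = if j = a ∨ j = b then 1 else 2) :
    nextRows 2 k M = (fun p : ℕ × ℕ => Pi.single a p.1 + Pi.single b p.2 +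
      Pi.single (k + 1) (2 - p.1 - p.2)) '' ↑(range 2 ×ˢ range 2) := by
  have hak : a ≠ k + 1 := by omega
  have hbk : b ≠ k + 1 := by omega
  have hmem := fun x hx y hy =>
    single_add_single_add_single_mem_nextRows (x := x) (y := y) ha hb hab hcol hx hy
  ext r
  refine ⟨fun hr => ?_, fun ⟨p, hp, hr⟩ => hr ▸ hmem p.1 (by simp_all) p.2 (by simp_all)⟩
  have hra : r a < 2 := by
    have := hr.2.2 a ha
    rw [hcol a ha, if_pos (Or.inl rfl)] at this
    omega
  have hrb : r b < 2 := by
    have := hr.2.2 b hb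
    rw [hcol b hb, if_pos (Or.inr rfl)] at this
    omega
  refine ⟨(r a, r b), by simp [hra, hrb], eq_of_mem_nextRows (hmem _ hra _ hrb) hr fun j hj => ?_⟩
  by_cases hja : j = a
  · simp [hja, hab, hak]
  · by_cases hjb : j = b
    · simp [hjb, hab.symm, hbk]
    · have := hr.2.2 j hj
      rw [hcol j hj, if_neg (by tauto)] at this
      simp only [Pi.add_apply, ne_eq, hja, not_false_eq_true, Pi.single_eq_of_ne, hjb, add_zero,
        show j ≠ k + 1 by omega]
      omega

lemma ncard_nextRows_of_halfColumns {a b : ℕ} (ha : a ≤ k) (hb : b ≤ k) (hab : a ≠ b)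
    (hcol : ∀ j ≤ k, colSum k M j = if j = a ∨ j = b then 1 else 2) :
    (nextRows 2 k M).ncard = 4 := by
  have hak : a ≠ k + 1 := by omega
  have hbk : b ≠ k + 1 := by omega
  rw [nextRows_eq_image_of_halfColumns ha hb hab hcol,
    Set.ncard_image_of_injective _ fun p p' h => Prod.ext
      (by simpa [hab, hak] using congrFun h a) (by simpa [hab.symm, hbk] using congrFun h b),
    Set.ncard_coe_finset]
  rfl

lemma ncard_sep_nextRows_of_halfColumns {a b : ℕ} (hM : M ∈ partialFillings 2 k) (ha : a ≤ k)
    (hb : b ≤ k) (hab : a ≠ b) (hcol : ∀ j ≤ k, colSum k M j = if j = a ∨ j = b then 1 else 2) :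
    {r ∈ nextRows 2 k M | HasEmptyColumn (k + 1) (update M k r)}.ncard = 1 := by
  have hak : a ≠ k + 1 := by omega
  have hbk : b ≠ k + 1 := by omega
  have hset : {r ∈ nextRows 2 k M | HasEmptyColumn (k + 1) (update M k r)} =
      {Pi.single a 1 + Pi.single b 1 + Pi.single (k + 1) 0} := by
    rw [nextRows_eq_image_of_halfColumns ha hb hab hcol]
    ext r
    simp only [Set.mem_ofPred_eq, Set.mem_image, Set.mem_singleton_iff, coe_product, coe_range,
      Set.mem_prod, Set.mem_Iio, Prod.exists, hasEmptyColumn_update_iff hM]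
    constructor
    · rintro ⟨⟨x, y, ⟨hx, hy⟩, rfl⟩, hP⟩
      rcases hP with h | ⟨j, hj, h⟩
      · simp only [Pi.add_apply, Pi.single_eq_same, Pi.single_eq_of_ne hak.symm,
          Pi.single_eq_of_ne hbk.symm, zero_add] at h
        obtain ⟨rfl, rfl⟩ : x = 1 ∧ y = 1 := by omega
        rfl
      · rw [hcol j hj] at h
        split_ifs at h <;> omega
    · rintro rfl
      exact ⟨⟨1, 1, ⟨by omega, by omega⟩, rfl⟩, Or.inl (by simp [hak, hbk])⟩
  rw [hset, Set.ncard_singleton]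

lemma not_hasEmptyColumn_of_colSum_eq_ite {a b : ℕ}
    (hcol : ∀ j ≤ k, colSum k M j = if j = a ∨ j = b then 1 else 2) : ¬HasEmptyColumn k M := by
  rintro ⟨j, hj, h⟩
  rw [hcol j hj] at h
  split_ifs at h

lemma ncard_nextRows_add_ite (hM : M ∈ partialFillings 2 k) :
    (nextRows 2 k M).ncard + (if HasEmptyColumn k M then 1 else 0) = 4 := by
  rcases colSum_cases hM with ⟨a, ha, hcol⟩ | ⟨a, ha, b, hb, hab, hcol⟩
  · rw [ncard_nextRows_of_emptyColumn ha hcol, if_pos ⟨a, ha, by simp [hcol a ha]⟩]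
  · rw [ncard_nextRows_of_halfColumns ha hb hab hcol,
      if_neg (not_hasEmptyColumn_of_colSum_eq_ite hcol)]

lemma ncard_sep_nextRows_hasEmptyColumn (hM : M ∈ partialFillings 2 k) :
    {r ∈ nextRows 2 k M | HasEmptyColumn (k + 1) (update M k r)}.ncard =
      1 + if HasEmptyColumn k M then 1 else 0 := by
  rcases colSum_cases hM with ⟨a, ha, hcol⟩ | ⟨a, ha, b, hb, hab, hcol⟩
  · rw [ncard_sep_nextRows_of_emptyColumn hM ha hcol, if_pos ⟨a, ha, by simp [hcol a ha]⟩]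
  · rw [ncard_sep_nextRows_of_halfColumns hM ha hb hab hcol,
      if_neg (not_hasEmptyColumn_of_colSum_eq_ite hcol)]

lemma sum_ite_hasEmptyColumn (t k : ℕ) :
    ∑ M ∈ (partialFillings_finite t k).toFinset, (if HasEmptyColumn k M then 1 else 0) =
      {M ∈ partialFillings t k | HasEmptyColumn k M}.ncard := by
  rw [sum_boole, Nat.cast_id, ← Set.ncard_coe_finset, coe_filter]
  simp only [Set.Finite.mem_toFinset]

lemma ncard_partialFillings_two_succ (k : ℕ) :
    (partialFillings 2 (k + 1)).ncard + {M ∈ partialFillings 2 k | HasEmptyColumn k M}.ncard =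
      4 * (partialFillings 2 k).ncard := by
  have h := ncard_sep_partialFillings_succ (t := 2) (k := k) fun _ => True
  simp only [and_true, Set.ofPred_mem_eq] at h
  rw [h, ← sum_ite_hasEmptyColumn, ← sum_add_distrib, sum_congr rfl fun M hM =>
      ncard_nextRows_add_ite ((Set.Finite.mem_toFinset _).1 hM), sum_const, smul_eq_mul,
    Set.ncard_eq_toFinset_card _ (partialFillings_finite 2 k), mul_comm]

lemma ncard_hasEmptyColumn_succ (k : ℕ) :
    {f ∈ partialFillings 2 (k + 1) | HasEmptyColumn (k + 1) f}.ncard =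
      (partialFillings 2 k).ncard + {M ∈ partialFillings 2 k | HasEmptyColumn k M}.ncard := by
  rw [ncard_sep_partialFillings_succ, sum_congr rfl fun M hM =>
      ncard_sep_nextRows_hasEmptyColumn ((Set.Finite.mem_toFinset _).1 hM), sum_add_distrib,
    sum_const, smul_eq_mul, mul_one, sum_ite_hasEmptyColumn,
    Set.ncard_eq_toFinset_card _ (partialFillings_finite 2 k)]

lemma partialFillings_zero (t : ℕ) : partialFillings t 0 = {0} := by
  ext f
  refine ⟨fun hf => funext₂ fun i j => hf.1 i j (Or.inl (Nat.zero_le i)), ?_⟩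
  rintro rfl
  exact ⟨fun _ _ _ => rfl, fun _ hi => absurd hi (Nat.not_lt_zero _), fun _ _ => Nat.zero_le t⟩

lemma hasEmptyColumn_zero (f : ℕ → ℕ → ℕ) : HasEmptyColumn 0 f := ⟨0, le_rfl, rfl⟩

end StaircaseMatrix

open StaircaseMatrix in
/-- The sequence `g 2 n` satisfies the linear recurrence
`g 2 n = 5 * g 2 (n-1) - 5 * g 2 (n-2)` for all `n ≥ 4`, with initial values
`g 2 2 = 3` and `g 2 3 = 10`. -/
theorem g_two_recurrence :
    (∀ n : ℕ, 4 ≤ n →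
      (g 2 n : ℤ) = 5 * (g 2 (n - 1) : ℤ) - 5 * (g 2 (n - 2) : ℤ)) ∧
    g 2 2 = 3 ∧ g 2 3 = 10 := by
  set T : ℕ → ℕ := fun k => (partialFillings 2 k).ncard
  set E : ℕ → ℕ := fun k => {M ∈ partialFillings 2 k | HasEmptyColumn k M}.ncard
  have hg (k : ℕ) : g 2 (k + 1) = T k :=
    (g_eq_ncard_fillings 2 (k + 1)).trans (ncard_fillings_succ 2 k)
  have hT (k : ℕ) : T (k + 1) + E k = 4 * T k := ncard_partialFillings_two_succ k
  have hE (k : ℕ) : E (k + 1) = T k + E k := ncard_hasEmptyColumn_succ k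
  have hT0 : T 0 = 1 := by simp [T, partialFillings_zero]
  have hE0 : E 0 = 1 := by simp [E, partialFillings_zero, hasEmptyColumn_zero]
  refine ⟨fun n hn => ?_, ?_, ?_⟩
  · obtain ⟨k, rfl⟩ : ∃ k, n = k + 4 := ⟨n - 4, by omega⟩
    rw [show k + 4 - 1 = k + 2 + 1 by omega, show k + 4 - 2 = k + 1 + 1 by omega, hg, hg, hg]
    have h₁ : T (k + 3) + E (k + 2) = 4 * T (k + 2) := hT (k + 2)
    have h₂ : E (k + 2) = T (k + 1) + E (k + 1) := hE (k + 1)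
    have h₃ : T (k + 2) + E (k + 1) = 4 * T (k + 1) := hT (k + 1)
    omega
  · have h₁ : T 1 + E 0 = 4 * T 0 := hT 0
    rw [hg 1]
    omega
  · have h₁ : T 1 + E 0 = 4 * T 0 := hT 0
    have h₂ : T 2 + E 1 = 4 * T 1 := hT 1
    have h₃ : E 1 = T 0 + E 0 := hE 0
    rw [hg 2]
    omega
end

section
/- The sequence g_3(n) satisfies the linear recurrence g_3(n) = 10·g_3(n-1) − 27·g_3(n-2) + 20·g_3(n-3) for all n ≥ 5. -/
open Finset

namespace HessenbergCount

def colSum (t : ℕ) (d : List ℕ) (j : ℕ) : ℕ := d.getD j t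

/-- An `(r + 1)`-row partial filling: row `i` may use the `d.length` columns that are already open,
with remaining demands `d`, and the fresh columns `d.length, …, d.length + i`, of demand `t`. Only
`d.length + r` columns exist: the column the last row would open is cut off, as in the square
matrix, where `g t (q + 1)` is the case `d = [t]`, `r = q`. -/
structure IsHessArray (t : ℕ) (d : List ℕ) (r : ℕ) (M : ℕ → ℕ → ℕ) : Prop where
  row_vanish : ∀ i j, r < i → M i j = 0
  staircase : ∀ i j, i + d.length < j → M i j = 0
  col_vanish : ∀ i j, d.length + r ≤ j → M i j = 0
  row_sum : ∀ i ≤ r, ∑ j ∈ range (d.length + r), M i j = t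
  col_sum : ∀ j < d.length + r, ∑ i ∈ range (r + 1), M i j = colSum t d j

noncomputable def hessCount (t : ℕ) (d : List ℕ) (r : ℕ) : ℕ :=
  {M | IsHessArray t d r M}.ncard

variable {t r : ℕ} {d : List ℕ} {M : ℕ → ℕ → ℕ}

lemma IsHessArray.apply_le (hM : IsHessArray t d r M) (i j : ℕ) : M i j ≤ t := by
  by_cases hi : i ≤ r
  · by_cases hj : j < d.length + r
    · rw [← hM.row_sum i hi]
      exact single_le_sum (fun _ _ => Nat.zero_le _) (mem_range.2 hj)
    · simp [hM.col_vanish i j (by omega)]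
  · simp [hM.row_vanish i j (by omega)]

lemma finite_setOf_isHessArray (t : ℕ) (d : List ℕ) (r : ℕ) :
    {M | IsHessArray t d r M}.Finite := by
  let trunc (M : ℕ → ℕ → ℕ) (i : Fin (r + 1)) (j : Fin (d.length + r)) : Fin (t + 1) :=
    ⟨min (M i j) t, by omega⟩
  refine Set.Finite.of_finite_image (f := trunc) (Set.toFinite _) fun M hM N hN hMN => ?_
  funext i j
  by_cases hi : i ≤ r
  · by_cases hj : j < d.length + r
    · have := congrArg Fin.val (congrFun₂ hMN ⟨i, by omega⟩ ⟨j, hj⟩)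
      have := hM.apply_le i j
      have := hN.apply_le i j
      simp only [trunc] at *
      omega
    · rw [hM.col_vanish i j (by omega), hN.col_vanish i j (by omega)]
  · rw [hM.row_vanish i j (by omega), hN.row_vanish i j (by omega)]

lemma IsHessArray.col_zero_of_colSum_eq_zero (hM : IsHessArray t d r M) {j : ℕ}
    (hj : j < d.length + r) (h0 : colSum t d j = 0) (i : ℕ) : M i j = 0 := by
  by_cases hi : i ≤ r
  · have := hM.col_sum j hj
    rw [h0, sum_eq_zero_iff] at this
    exact this i (mem_range.2 (by omega))
  · exact hM.row_vanish i j (by omega)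

lemma isHessArray_cons_zero_iff :
    IsHessArray t (0 :: d) r M ↔
      (∀ i, M i 0 = 0) ∧ IsHessArray t d r (fun i j => M i (j + 1)) := by
  have hlen : (0 :: d).length + r = d.length + r + 1 := by simp only [List.length_cons]; omega
  have hcol : ∀ j, colSum t (0 :: d) (j + 1) = colSum t d j := fun _ => rfl
  constructor
  · intro hM
    refine ⟨fun i => hM.col_zero_of_colSum_eq_zero (by omega) rfl i,
      fun i j hi => hM.row_vanish i _ hi,
      fun i j hj => hM.staircase i _ (by simp only [List.length_cons]; omega),
      fun i j hj => hM.col_vanish i _ (by omega), fun i hi => ?_, fun j hj => ?_⟩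
    · rw [← hM.row_sum i hi, hlen, sum_range_succ',
        hM.col_zero_of_colSum_eq_zero (by omega) rfl i, add_zero]
    · rw [← hcol, ← hM.col_sum (j + 1) (by omega)]
  · rintro ⟨h0, hN⟩
    refine ⟨fun i j hi => ?_, fun i j hj => ?_, fun i j hj => ?_, fun i hi => ?_,
      fun j hj => ?_⟩
    · rcases j with _ | j
      · exact h0 i
      · exact hN.row_vanish i j hi
    · rcases j with _ | j
      · exact h0 i
      · exact hN.staircase i j (by simp only [List.length_cons] at hj; omega)
    · rcases j with _ | j
      · exact h0 i
      · exact hN.col_vanish i j (by omega)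
    · rw [hlen, sum_range_succ', h0, add_zero]
      exact hN.row_sum i hi
    · rcases j with _ | j
      · simp [h0, colSum]
      · rw [hcol]
        exact hN.col_sum j (by omega)

lemma hessCount_zero_cons (t : ℕ) (d : List ℕ) (r : ℕ) :
    hessCount t (0 :: d) r = hessCount t d r := by
  refine Set.ncard_congr (fun M _ i j => M i (j + 1))
    (fun M hM => (isHessArray_cons_zero_iff.1 hM).2) (fun M N hM hN hMN => ?_)
    (fun N hN => ⟨fun i j => if j = 0 then 0 else N i (j - 1), ?_, ?_⟩)
  · funext i j
    rcases j with _ | j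
    · rw [(isHessArray_cons_zero_iff.1 hM).1, (isHessArray_cons_zero_iff.1 hN).1]
    · exact congrFun₂ hMN i j
  · exact isHessArray_cons_zero_iff.2 ⟨fun i => rfl, by simpa using hN⟩
  · simp

lemma IsHessArray.comp_colPerm {d' : List ℕ} (σ : Equiv.Perm ℕ)
    (hσ : ∀ j, d.length ≤ j → σ j = j)
    (hlen : d'.length = d.length) (hcol : ∀ j, colSum t d' j = colSum t d (σ j))
    (hM : IsHessArray t d r M) : IsHessArray t d' r (fun i j => M i (σ j)) := by
  have hlt : ∀ j < d.length, σ j < d.length := fun j hj => by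
    by_contra h
    exact absurd (σ.injective (hσ (σ j) (by omega))) (by omega)
  have hσ' : ∀ j, σ j < d.length + r ↔ j < d.length + r := fun j => by
    by_cases hj : j < d.length
    · have := hlt j hj; omega
    · rw [hσ j (by omega)]
  refine ⟨fun i j hi => hM.row_vanish i _ hi, fun i j hj => ?_, fun i j hj => ?_,
    fun i hi => ?_, fun j hj => ?_⟩
  · rw [hσ j (by omega)]; exact hM.staircase i j (by omega)
  · exact hM.col_vanish i _ (by have := (hσ' j).not; omega)
  · rw [hlen, σ.sum_comp _ (M i) fun j hj => mem_range.2 ?_, hM.row_sum i hi]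
    by_contra h
    exact hj (hσ j (by omega))
  · rw [hcol, hM.col_sum _ ((hσ' j).2 (by omega))]

lemma hessCount_le_of_colPerm {d' : List ℕ} (σ : Equiv.Perm ℕ)
    (hσ : ∀ j, d.length ≤ j → σ j = j)
    (hlen : d'.length = d.length) (hcol : ∀ j, colSum t d' j = colSum t d (σ j)) :
    hessCount t d r ≤ hessCount t d' r :=
  Set.ncard_le_ncard_of_injOn (fun M i j => M i (σ j))
    (fun _ hM => hM.comp_colPerm σ hσ hlen hcol)
    (fun M _ N _ h => funext₂ fun i j => by simpa using congrFun₂ h i (σ.symm j))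
    (finite_setOf_isHessArray t d' r)

lemma hessCount_eq_of_colPerm {d' : List ℕ} (σ : Equiv.Perm ℕ)
    (hσ : ∀ j, d.length ≤ j → σ j = j)
    (hlen : d'.length = d.length) (hcol : ∀ j, colSum t d' j = colSum t d (σ j)) :
    hessCount t d r = hessCount t d' r := by
  refine (hessCount_le_of_colPerm σ hσ hlen hcol).antisymm
    (hessCount_le_of_colPerm σ.symm (fun j hj => ?_) hlen.symm fun j => ?_)
  · rw [Equiv.symm_apply_eq, hσ j (by omega)]
  · rw [hcol, Equiv.apply_symm_apply]

lemma colSum_append_swap (l₁ l₂ : List ℕ) (a b j : ℕ) :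
    colSum t (l₁ ++ b :: a :: l₂) j =
      colSum t (l₁ ++ a :: b :: l₂) (Equiv.swap l₁.length (l₁.length + 1) j) := by
  rw [Equiv.swap_apply_def]
  split_ifs with h₁ h₂
  · subst h₁; simp [colSum]
  · subst h₂; simp [colSum]
  · simp only [colSum, List.getD_eq_getElem?_getD, List.getElem?_append]
    split_ifs with h₃
    · rfl
    · obtain ⟨m, rfl⟩ : ∃ m, j = l₁.length + 2 + m := ⟨j - l₁.length - 2, by omega⟩
      simp [show l₁.length + 2 + m - l₁.length = m + 2 by omega]

lemma hessCount_append_swap (l₁ l₂ : List ℕ) (a b : ℕ) :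
    hessCount t (l₁ ++ a :: b :: l₂) r = hessCount t (l₁ ++ b :: a :: l₂) r :=
  hessCount_eq_of_colPerm _ (fun j hj => Equiv.swap_apply_of_ne_of_ne
    (by simp at hj; omega) (by simp at hj; omega)) (by simp) (colSum_append_swap l₁ l₂ a b)

lemma hessCount_perm {d' : List ℕ} (h : d.Perm d') : hessCount t d r = hessCount t d' r := by
  -- The prefix `l` is what lets the `cons` case go through.
  suffices ∀ l, hessCount t (l ++ d) r = hessCount t (l ++ d') r from this []
  induction h with
  | nil => exact fun _ => rfl
  | cons x _ ih => exact fun l => by simpa using ih (l ++ [x])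
  | swap x y l => exact fun l' => hessCount_append_swap l' l y x
  | trans _ _ ih₁ ih₂ => exact fun l => (ih₁ l).trans (ih₂ l)

lemma hessCount_replicate_zero_append (k : ℕ) :
    hessCount t (List.replicate k 0 ++ d) r = hessCount t d r := by
  induction k with
  | zero => rfl
  | succ k ih => rw [List.replicate_succ, List.cons_append, hessCount_zero_cons, ih]

def demandPartition (d : List ℕ) : List ℕ := (d.filter (· ≠ 0)).insertionSort (· ≥ ·)

lemma hessCount_demandPartition : hessCount t (demandPartition d) r = hessCount t d r := by
  have hzero : d.filter (· = 0) = List.replicate (d.filter (· = 0)).length 0 :=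
    List.eq_replicate_iff.2 ⟨rfl, fun b hb => by simpa using (List.mem_filter.1 hb).2⟩
  have hperm : (List.replicate (d.filter (· = 0)).length 0 ++ demandPartition d).Perm d := by
    rw [← hzero]
    refine ((List.perm_insertionSort _ _).append_left _).trans ?_
    simpa using List.filter_append_perm (fun x => decide (x = 0)) d
  rw [← hessCount_perm hperm, hessCount_replicate_zero_append]

def firstRows (t : ℕ) (d : List ℕ) : Finset (Fin (d.length + 1) → ℕ) :=
  (Nat.antidiagonalTuple (d.length + 1) t).filter fun v => ∀ j, v j ≤ colSum t d j

def rowResidual (t : ℕ) (d : List ℕ) (v : Fin (d.length + 1) → ℕ) : List ℕ :=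
  List.ofFn fun j => colSum t d j - v j

def zeroExtend {n : ℕ} (v : Fin n → ℕ) (j : ℕ) : ℕ :=
  if h : j < n then v ⟨j, h⟩ else 0

def prependRow {n : ℕ} (v : Fin n → ℕ) (M : ℕ → ℕ → ℕ) : ℕ → ℕ → ℕ
  | 0 => zeroExtend v
  | i + 1 => M i

lemma sum_range_zeroExtend {n m : ℕ} (v : Fin n → ℕ) (h : n ≤ m) :
    ∑ j ∈ range m, zeroExtend v j = ∑ j, v j := by
  rw [← sum_subset (range_subset_range.2 h) fun j _ hj => by simp_all [zeroExtend],
    ← Fin.sum_univ_eq_sum_range]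
  simp [zeroExtend]

lemma zeroExtend_le_colSum {v : Fin (d.length + 1) → ℕ} (hv : v ∈ firstRows t d) (j : ℕ) :
    zeroExtend v j ≤ colSum t d j := by
  unfold zeroExtend
  split_ifs with h
  · exact (mem_filter.1 hv).2 ⟨j, h⟩
  · exact Nat.zero_le _

lemma colSum_rowResidual (v : Fin (d.length + 1) → ℕ) (j : ℕ) :
    colSum t (rowResidual t d v) j = colSum t d j - zeroExtend v j := by
  simp only [colSum, rowResidual, zeroExtend, List.getD_eq_getElem?_getD, List.getElem?_ofFn]
  split_ifs with h
  · rfl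
  · simp [List.getElem?_eq_none (by omega : d.length ≤ j)]

lemma IsHessArray.zeroExtend_firstRow (hM : IsHessArray t d (r + 1) M) :
    zeroExtend (fun j : Fin (d.length + 1) => M 0 j) = M 0 := by
  funext j
  unfold zeroExtend
  split_ifs with h
  · rfl
  · exact (hM.staircase 0 j (by omega)).symm

lemma IsHessArray.firstRow_mem (hM : IsHessArray t d (r + 1) M) :
    (fun j : Fin (d.length + 1) => M 0 j) ∈ firstRows t d := by
  refine mem_filter.2 ⟨Nat.mem_antidiagonalTuple.2 ?_, fun j => ?_⟩
  · rw [← sum_range_zeroExtend _ (by omega : d.length + 1 ≤ d.length + (r + 1)),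
      hM.zeroExtend_firstRow, hM.row_sum 0 (Nat.zero_le _)]
  · rw [← hM.col_sum j (by omega)]
    exact single_le_sum (f := fun i => M i j) (fun _ _ => Nat.zero_le _)
      (mem_range.2 (by omega))

lemma IsHessArray.tail (hM : IsHessArray t d (r + 1) M) :
    IsHessArray t (rowResidual t d fun j => M 0 j) r (fun i => M (i + 1)) := by
  have hlen : (rowResidual t d fun j => M 0 j).length = d.length + 1 := by simp [rowResidual]
  refine ⟨fun i j hi => hM.row_vanish _ j (by omega), fun i j hj => hM.staircase _ j (by omega),
    fun i j hj => hM.col_vanish _ j (by omega), fun i hi => ?_, fun j hj => ?_⟩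
  · rw [hlen, ← hM.row_sum (i + 1) (by omega)]
    ring_nf
  · have hcol := hM.col_sum j (by omega)
    rw [sum_range_succ'] at hcol
    rw [colSum_rowResidual, hM.zeroExtend_firstRow]
    omega

lemma IsHessArray.prependRow {v : Fin (d.length + 1) → ℕ} (hv : v ∈ firstRows t d)
    (hM : IsHessArray t (rowResidual t d v) r M) : IsHessArray t d (r + 1) (prependRow v M) := by
  have hlen : (rowResidual t d v).length = d.length + 1 := by simp [rowResidual]
  refine ⟨fun i j hi => ?_, fun i j hj => ?_, fun i j hj => ?_, fun i hi => ?_, fun j hj => ?_⟩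
  · obtain ⟨i, rfl⟩ : ∃ i', i = i' + 1 := ⟨i - 1, by omega⟩
    exact hM.row_vanish i j (by omega)
  · rcases i with _ | i
    · simp [HessenbergCount.prependRow, zeroExtend]; omega
    · exact hM.staircase i j (by omega)
  · rcases i with _ | i
    · simp [HessenbergCount.prependRow, zeroExtend]; omega
    · exact hM.col_vanish i j (by omega)
  · rcases i with _ | i
    · rw [HessenbergCount.prependRow, sum_range_zeroExtend _ (by omega)]
      exact Nat.mem_antidiagonalTuple.1 (mem_filter.1 hv).1
    · rw [HessenbergCount.prependRow, ← hM.row_sum i (by omega), hlen]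
      ring_nf
  · rw [sum_range_succ']
    simp only [HessenbergCount.prependRow]
    rw [hM.col_sum j (by omega), colSum_rowResidual]
    have := zeroExtend_le_colSum hv j
    omega

lemma prependRow_injective {n : ℕ} (v : Fin n → ℕ) : Function.Injective (prependRow v) :=
  fun _ _ h => funext fun i => congrFun h (i + 1)

lemma setOf_isHessArray_firstRow_eq {v : Fin (d.length + 1) → ℕ} (hv : v ∈ firstRows t d) :
    {M | IsHessArray t d (r + 1) M ∧ (fun j : Fin (d.length + 1) => M 0 j) = v} =
      prependRow v '' {M | IsHessArray t (rowResidual t d v) r M} := by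
  ext M
  constructor
  · rintro ⟨hM, rfl⟩
    refine ⟨fun i => M (i + 1), hM.tail, funext fun i => ?_⟩
    rcases i with _ | i
    · exact hM.zeroExtend_firstRow
    · rfl
  · rintro ⟨N, hN, rfl⟩
    refine ⟨hN.prependRow hv, funext fun j => ?_⟩
    simp [HessenbergCount.prependRow, zeroExtend, j.isLt]

theorem hessCount_succ (t : ℕ) (d : List ℕ) (r : ℕ) :
    hessCount t d (r + 1) = ∑ v ∈ firstRows t d, hessCount t (rowResidual t d v) r := by
  classical
  have hS := finite_setOf_isHessArray t d (r + 1)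
  rw [hessCount, Set.ncard_eq_toFinset_card _ hS,
    card_eq_sum_card_fiberwise fun M hM => (hS.mem_toFinset.1 hM).firstRow_mem]
  refine sum_congr rfl fun v hv => ?_
  rw [← Set.ncard_coe_finset, coe_filter]
  simp only [Set.Finite.mem_toFinset, Set.mem_ofPred_eq]
  rw [setOf_isHessArray_firstRow_eq hv, Set.ncard_image_of_injective _ (prependRow_injective v),
    hessCount]

def successors (t : ℕ) (d : List ℕ) : Multiset (List ℕ) :=
  (firstRows t d).val.map fun v => demandPartition (rowResidual t d v)

theorem hessCount_succ_eq_sum_successors (t : ℕ) (d : List ℕ) (r : ℕ) :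
    hessCount t d (r + 1) = ((successors t d).map (hessCount t · r)).sum := by
  rw [hessCount_succ, successors, Multiset.map_map, sum_eq_multiset_sum]
  simp only [Function.comp_def, hessCount_demandPartition]

lemma hessCount_three_succ (r : ℕ) :
    hessCount 3 [3] (r + 1) = 2 * hessCount 3 [3] r + 2 * hessCount 3 [2, 1] r := by
  rw [hessCount_succ_eq_sum_successors,
    show successors 3 [3] = {[3], [2, 1], [2, 1], [3]} by decide]
  simp only [Multiset.insert_eq_cons, Multiset.map_cons, Multiset.sum_cons,
    Multiset.map_singleton, Multiset.sum_singleton]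
  ring

lemma hessCount_two_one_succ (r : ℕ) :
    hessCount 3 [2, 1] (r + 1) =
      hessCount 3 [3] r + 4 * hessCount 3 [2, 1] r + hessCount 3 [1, 1, 1] r := by
  rw [hessCount_succ_eq_sum_successors,
    show successors 3 [2, 1] = {[3], [2, 1], [2, 1], [1, 1, 1], [2, 1], [2, 1]} by decide]
  simp only [Multiset.insert_eq_cons, Multiset.map_cons, Multiset.sum_cons,
    Multiset.map_singleton, Multiset.sum_singleton]
  ring

lemma hessCount_one_one_one_succ (r : ℕ) :
    hessCount 3 [1, 1, 1] (r + 1) =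
      hessCount 3 [3] r + 3 * hessCount 3 [2, 1] r + 4 * hessCount 3 [1, 1, 1] r := by
  rw [hessCount_succ_eq_sum_successors, show successors 3 [1, 1, 1] =
    {[3], [2, 1], [2, 1], [1, 1, 1], [2, 1], [1, 1, 1], [1, 1, 1], [1, 1, 1]} by decide]
  simp only [Multiset.insert_eq_cons, Multiset.map_cons, Multiset.sum_cons,
    Multiset.map_singleton, Multiset.sum_singleton]
  ring

lemma linear_recurrence_of_transfer {a b c : ℕ → ℤ}
    (ha : ∀ r, a (r + 1) = 2 * a r + 2 * b r)
    (hb : ∀ r, b (r + 1) = a r + 4 * b r + c r)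
    (hc : ∀ r, c (r + 1) = a r + 3 * b r + 4 * c r) (k : ℕ) :
    a (k + 3) = 10 * a (k + 2) - 27 * a (k + 1) + 20 * a k := by
  linarith [ha (k + 2), ha (k + 1), ha k, hb (k + 1), hb k, hc k]

def extendMatrix {n : ℕ} (N : Matrix (Fin n) (Fin n) ℕ) (i j : ℕ) : ℕ :=
  if h : i < n ∧ j < n then N ⟨i, h.1⟩ ⟨j, h.2⟩ else 0

lemma extendMatrix_transpose {n : ℕ} (N : Matrix (Fin n) (Fin n) ℕ) (i j : ℕ) :
    extendMatrix N.transpose i j = extendMatrix N j i := by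
  simp [extendMatrix, and_comm]

lemma sum_range_extendMatrix {n : ℕ} (N : Matrix (Fin n) (Fin n) ℕ) (i : Fin n) :
    ∑ j ∈ range n, extendMatrix N i j = ∑ j, N i j := by
  simp [← Fin.sum_univ_eq_sum_range, extendMatrix]

theorem g_succ_eq_hessCount (t q : ℕ) : g t (q + 1) = hessCount t [t] q := by
  have hlen : [t].length + q = q + 1 := by simp [add_comm]
  have hcol : ∀ j, colSum t [t] j = t := fun j => by cases j <;> simp [colSum]
  refine Set.ncard_congr (fun N _ => extendMatrix N) (fun N ⟨hstair, hrow, hcol'⟩ => ?_)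
    (fun N N' _ _ h => Matrix.ext fun i j => by
      simpa [extendMatrix, Fin.is_le] using congrFun₂ h i j)
    (fun M hM => ⟨Matrix.of fun i j => M i j, ?_, ?_⟩)
  · refine ⟨fun i j hi => by simp [extendMatrix]; omega, fun i j hij => ?_,
      fun i j hj => by simp [extendMatrix]; omega, fun i hi => ?_, fun j hj => ?_⟩
    · simp only [extendMatrix]
      split_ifs with h
      · exact hstair ⟨i, h.1⟩ ⟨j, h.2⟩
          (by simp only [List.length_singleton] at hij; simp; omega)
      · rfl
    · rw [hlen, sum_range_extendMatrix N ⟨i, by omega⟩, hrow]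
    · have hj' : j < q + 1 := by simpa [add_comm] using hj
      rw [hcol, ← hcol' ⟨j, hj'⟩]
      simp_rw [← extendMatrix_transpose N]
      exact sum_range_extendMatrix N.transpose ⟨j, hj'⟩
  · refine ⟨fun i j hij => hM.staircase i j (by simp; omega), fun i => ?_, fun j => ?_⟩
    · rw [← hM.row_sum i (by omega), hlen, ← Fin.sum_univ_eq_sum_range (M i)]
      rfl
    · rw [← hcol j, ← hM.col_sum j (by omega), ← Fin.sum_univ_eq_sum_range (M · j)]
      rfl
  · funext i j
    simp only [extendMatrix, Matrix.of_apply]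
    split_ifs with h
    · rfl
    · rcases not_and_or.1 h with h | h
      · exact (hM.row_vanish i j (by omega)).symm
      · exact (hM.col_vanish i j (by simp; omega)).symm

end HessenbergCount

open HessenbergCount

/-- The sequence `g 3 n` satisfies the linear recurrence
`g 3 n = 10 * g 3 (n-1) - 27 * g 3 (n-2) + 20 * g 3 (n-3)` for all `n ≥ 5`. -/
theorem g_three_recurrence :
    ∀ n : ℕ, 5 ≤ n →
      (g 3 n : ℤ) =
        10 * (g 3 (n - 1) : ℤ) - 27 * (g 3 (n - 2) : ℤ) + 20 * (g 3 (n - 3) : ℤ) := by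
  intro n hn
  obtain ⟨k, rfl⟩ : ∃ k, n = k + 5 := ⟨n - 5, by omega⟩
  rw [show k + 5 - 1 = k + 3 + 1 by omega, show k + 5 - 2 = k + 2 + 1 by omega,
    show k + 5 - 3 = k + 1 + 1 by omega, show k + 5 = k + 4 + 1 by omega]
  simp only [g_succ_eq_hessCount]
  exact linear_recurrence_of_transfer (a := fun r => (hessCount 3 [3] r : ℤ))
    (b := fun r => (hessCount 3 [2, 1] r : ℤ)) (c := fun r => (hessCount 3 [1, 1, 1] r : ℤ))
    (fun r => by exact_mod_cast hessCount_three_succ r)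
    (fun r => by exact_mod_cast hessCount_two_one_succ r)
    (fun r => by exact_mod_cast hessCount_one_one_one_succ r) (k + 1)
end

section
/- Let n ≥ 2 and t ≥ 1 be integers, and suppose Y is an n×n matrix of integers with Y_{ij} ≥ 1 for all pairs (i,j) with j ≤ i+1, Y_{ij} = 0 for all pairs with j ≥ i+2, and all row sums and column sums equal to t. Then for every k with 0 ≤ k ≤ n−1, one has t ≥ (k+1)(n−k). -/
/-- card of Fin n elements with value ≥ a. -/
lemma card_filter_le_fin (n a : ℕ) :
    (Finset.univ.filter (fun j : Fin n => a ≤ (j : ℕ))).card = n - a := by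
  have h : (Finset.univ.filter (fun j : Fin n => a ≤ (j : ℕ))).map Fin.valEmbedding
      = Finset.Ico a n := by
    ext x
    simp only [Finset.mem_map, Finset.mem_filter, Finset.mem_univ, true_and,
      Fin.valEmbedding_apply, Finset.mem_Ico]
    constructor
    · rintro ⟨j, hj, rfl⟩; exact ⟨hj, j.isLt⟩
    · rintro ⟨h1, h2⟩; exact ⟨⟨x, h2⟩, h1, rfl⟩
  have := congrArg Finset.card h
  rwa [Finset.card_map, Nat.card_Ico] at this

/-- Let `n ≥ 2` and `t ≥ 1` be integers, and suppose `Y` is an `n × n` integer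
matrix with `Y i j ≥ 1` for all pairs `(i,j)` with `j ≤ i + 1`, `Y i j = 0` for
all pairs with `j ≥ i + 2` (all conditions `0`-based, matching the `1`-based
conditions in the paper), and all row and column sums equal to `t`.  Then for
every `k` with `0 ≤ k ≤ n - 1` one has `t ≥ (k+1) * (n-k)`. -/
theorem interior_point_bound (n : ℕ) (hn : 2 ≤ n) (t : ℕ) (ht : 1 ≤ t)
    (Y : Matrix (Fin n) (Fin n) ℤ)
    (hpos : ∀ i j : Fin n, (j : ℕ) ≤ (i : ℕ) + 1 → 1 ≤ Y i j)
    (hzero : ∀ i j : Fin n, (i : ℕ) + 2 ≤ (j : ℕ) → Y i j = 0)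
    (hrow : ∀ i : Fin n, ∑ j, Y i j = (t : ℤ))
    (hcol : ∀ j : Fin n, ∑ i, Y i j = (t : ℤ)) :
    ∀ k : ℕ, k ≤ n - 1 → (k + 1) * (n - k) ≤ t := by
  intro k hk
  have hkn : k < n := by omega
  set A := Finset.univ.filter (fun j : Fin n => k + 1 ≤ (j : ℕ)) with hAdef
  set B := Finset.univ.filter (fun i : Fin n => k ≤ (i : ℕ)) with hBdef
  have hA : A.card = n - (k + 1) := card_filter_le_fin n (k + 1)
  have hB : B.card = n - k := card_filter_le_fin n k
  -- total of entries in columns of A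
  have hS1 : ∑ j ∈ A, ∑ i, Y i j = (A.card : ℤ) * t := by
    rw [Finset.sum_congr rfl (fun j _ => hcol j), Finset.sum_const, nsmul_eq_mul]
  -- per-row bound
  have hrowbound : ∀ i : Fin n, i ∈ B → ∑ j ∈ A, Y i j ≤ (t : ℤ) - (k + 1) := by
    intro i hi
    simp only [hBdef, Finset.mem_filter, Finset.mem_univ, true_and] at hi
    have hsplit : ∑ j ∈ A, Y i j + ∑ j ∈ Finset.univ.filter (fun j : Fin n => ¬ (k + 1 ≤ (j : ℕ))), Y i j = (t : ℤ) := by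
      rw [hAdef, Finset.sum_filter_add_sum_filter_not]; exact hrow i
    have hcard : (Finset.univ.filter (fun j : Fin n => ¬ (k + 1 ≤ (j : ℕ)))).card = k + 1 := by
      have h1 : (Finset.univ.filter (fun j : Fin n => ¬ (k + 1 ≤ (j : ℕ)))).card
          = n - (n - (k+1)) := by
        have := Finset.card_filter_add_card_filter_not
          (s := (Finset.univ : Finset (Fin n))) (p := fun j : Fin n => k + 1 ≤ (j : ℕ))
        rw [← hAdef] at this
        simp only [Finset.card_univ, Fintype.card_fin] at this
        omega
      omega
    have hlow : ((k : ℤ) + 1) ≤ ∑ j ∈ Finset.univ.filter (fun j : Fin n => ¬ (k + 1 ≤ (j : ℕ))), Y i j := by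
      calc ((k : ℤ) + 1) = (Finset.univ.filter (fun j : Fin n => ¬ (k + 1 ≤ (j : ℕ)))).card • (1 : ℤ) := by
            rw [hcard]; push_cast; ring
        _ ≤ _ := by
            apply Finset.card_nsmul_le_sum
            intro j hj
            simp only [Finset.mem_filter, Finset.mem_univ, true_and, not_le] at hj
            exact hpos i j (by omega)
    linarith
  -- rows outside B contribute 0
  have hzerorow : ∀ i : Fin n, i ∉ B → ∑ j ∈ A, Y i j = 0 := by
    intro i hi
    simp only [hBdef, Finset.mem_filter, Finset.mem_univ, true_and, not_le] at hi
    apply Finset.sum_eq_zero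
    intro j hj
    simp only [hAdef, Finset.mem_filter, Finset.mem_univ, true_and] at hj
    exact hzero i j (by omega)
  have hS2 : ∑ i, ∑ j ∈ A, Y i j ≤ (B.card : ℤ) * ((t : ℤ) - (k + 1)) := by
    rw [← Finset.sum_filter_add_sum_filter_not Finset.univ (fun i : Fin n => k ≤ (i : ℕ))]
    have h1 : ∑ i ∈ B, ∑ j ∈ A, Y i j ≤ (B.card : ℤ) * ((t : ℤ) - (k + 1)) := by
      calc ∑ i ∈ B, ∑ j ∈ A, Y i j ≤ ∑ i ∈ B, ((t : ℤ) - (k + 1)) :=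
            Finset.sum_le_sum hrowbound
        _ = (B.card : ℤ) * ((t : ℤ) - (k + 1)) := by
            rw [Finset.sum_const, nsmul_eq_mul]
    have h2 : ∑ i ∈ Finset.univ.filter (fun i : Fin n => ¬ k ≤ (i : ℕ)), ∑ j ∈ A, Y i j = 0 := by
      apply Finset.sum_eq_zero
      intro i hi
      apply hzerorow
      simp only [hBdef, Finset.mem_filter, Finset.mem_univ, true_and]
      simp only [Finset.mem_filter, Finset.mem_univ, true_and] at hi
      exact hi
    rw [hBdef] at h1 ⊢
    linarith
  have hswap : ∑ j ∈ A, ∑ i, Y i j = ∑ i, ∑ j ∈ A, Y i j := Finset.sum_comm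
  have hmain : ((n : ℤ) - (k + 1)) * t ≤ ((n : ℤ) - k) * ((t : ℤ) - (k + 1)) := by
    have hca : ((A.card : ℕ) : ℤ) = (n : ℤ) - (k + 1) := by
      rw [hA]; push_cast [Nat.cast_sub (by omega : k + 1 ≤ n)]; ring
    have hcb : ((B.card : ℕ) : ℤ) = (n : ℤ) - k := by
      rw [hB]; push_cast [Nat.cast_sub hkn.le]; ring
    rw [← hca, ← hcb]
    rw [← hS1] at *
    rw [hswap]; exact hS2
  have hfin : ((k : ℤ) + 1) * ((n : ℤ) - k) ≤ (t : ℤ) := by nlinarith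
  zify [hkn.le]
  linarith
end

section
/- Let n ≥ 2 and t ≥ 1 be integers. If there exists an n×n integer matrix Y with Y_{ij} ≥ 1 whenever j ≤ i+1, Y_{ij} = 0 whenever j ≥ i+2, and all row and column sums equal to t, then t ≥ ⌈(n+1)/2⌉·⌊(n+1)/2⌋; in particular, for odd n = 2m+1 no such matrix exists when t ≤ (m+1)² − 1, and for even n = 2m no such matrix exists when t ≤ m(m+1) − 1. -/
/-!
Add up the entries of the first `k` columns; by the column sums this gives `k * t`.
Each of the first `k - 1` rows vanishes outside these columns, so contributes its full row sum `t`;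
each of the other `n + 1 - k` rows has all its entries in these columns `≥ 1`, so contributes
at least `k`. Hence `t ≥ (n + 1 - k) * k`, and `k = ⌈(n + 1) / 2⌉` gives the bound.
-/

/-- `IsInteriorPoint n t Y` says that the `n × n` integer matrix `Y` has
`Y i j ≥ 1` whenever `j ≤ i + 1`, `Y i j = 0` whenever `j ≥ i + 2`
(`0`-based indices, matching the `1`-based conditions in the paper), and all
row and column sums equal to `t`. -/
def IsInteriorPoint (n t : ℕ) (Y : Matrix (Fin n) (Fin n) ℤ) : Prop :=
  (∀ i j : Fin n, (j : ℕ) ≤ (i : ℕ) + 1 → 1 ≤ Y i j) ∧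
  (∀ i j : Fin n, (i : ℕ) + 2 ≤ (j : ℕ) → Y i j = 0) ∧
  (∀ i : Fin n, ∑ j, Y i j = (t : ℤ)) ∧
  (∀ j : Fin n, ∑ i, Y i j = (t : ℤ))

open Finset

def initialSegment (n k : ℕ) : Finset (Fin n) := {j | (j : ℕ) < k}

@[simp]
lemma mem_initialSegment {n k : ℕ} {j : Fin n} : j ∈ initialSegment n k ↔ (j : ℕ) < k := by
  simp [initialSegment]

lemma card_initialSegment {n k : ℕ} (hk : k ≤ n) : #(initialSegment n k) = k := by
  rw [initialSegment, Fin.card_filter_val_lt, min_eq_right hk]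

namespace IsInteriorPoint

variable {n t : ℕ} {Y : Matrix (Fin n) (Fin n) ℤ}

lemma sum_initialSegment_of_lt (hY : IsInteriorPoint n t Y) {k : ℕ} (i : Fin n)
    (hi : (i : ℕ) + 1 < k) : ∑ j ∈ initialSegment n k, Y i j = t := by
  rw [← hY.2.2.1 i]
  refine sum_subset (subset_univ _) fun j _ hj => hY.2.1 i j ?_
  rw [mem_initialSegment] at hj
  omega

lemma le_sum_initialSegment_of_le (hY : IsInteriorPoint n t Y) {k : ℕ} (hk : k ≤ n)
    (i : Fin n) (hi : k ≤ (i : ℕ) + 1) : (k : ℤ) ≤ ∑ j ∈ initialSegment n k, Y i j := by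
  have := card_nsmul_le_sum (initialSegment n k) (Y i) 1
    fun j hj => hY.1 i j (by rw [mem_initialSegment] at hj; omega)
  simpa [card_initialSegment hk] using this

lemma sum_sum_initialSegment (hY : IsInteriorPoint n t Y) {k : ℕ} (hk : k ≤ n) :
    ∑ i, ∑ j ∈ initialSegment n k, Y i j = k * t := by
  refine sum_comm.trans ?_
  simp [hY.2.2.2, card_initialSegment hk]

lemma mul_le (hY : IsInteriorPoint n t Y) {k : ℕ} (hk₀ : 0 < k) (hk : k ≤ n) :
    (n + 1 - k) * k ≤ t := by
  set rowSum : Fin n → ℤ := fun i => ∑ j ∈ initialSegment n k, Y i j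
  have hsplit := sum_add_sum_compl (initialSegment n (k - 1)) rowSum
  have htop : ∑ i ∈ initialSegment n (k - 1), rowSum i = ((k - 1 : ℕ) : ℤ) * t := by
    rw [sum_congr rfl fun i hi =>
        hY.sum_initialSegment_of_lt i (by rw [mem_initialSegment] at hi; omega),
      sum_const, card_initialSegment (by omega), nsmul_eq_mul]
  have hbot := card_nsmul_le_sum (initialSegment n (k - 1))ᶜ rowSum k
    fun i hi => hY.le_sum_initialSegment_of_le hk i
      (by simp only [mem_compl, mem_initialSegment, not_lt] at hi; omega)
  rw [card_compl, Fintype.card_fin, card_initialSegment (by omega), nsmul_eq_mul] at hbot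
  rw [hY.sum_sum_initialSegment hk, htop] at hsplit
  have : (((n + 1 - k) * k : ℕ) : ℤ) ≤ t := by
    push_cast [Nat.cast_sub (by omega : k ≤ n + 1), Nat.cast_sub (by omega : k - 1 ≤ n),
      Nat.cast_sub hk₀]
    push_cast [Nat.cast_sub hk₀, Nat.cast_sub (by omega : k - 1 ≤ n)] at hsplit hbot
    linarith
  exact_mod_cast this

lemma threshold_le (hY : IsInteriorPoint n t Y) : (n + 2) / 2 * ((n + 1) / 2) ≤ t := by
  rcases Nat.eq_zero_or_pos n with rfl | hn
  · simp
  · have := hY.mul_le (k := (n + 2) / 2) (by omega) (by omega)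
    rwa [show n + 1 - (n + 2) / 2 = (n + 1) / 2 by omega, mul_comm] at this

end IsInteriorPoint

theorem interior_point_threshold_general (n : ℕ) (t : ℕ) (ht : 1 ≤ t) :
    ((∃ Y : Matrix (Fin n) (Fin n) ℤ, IsInteriorPoint n t Y) →
      (n + 2) / 2 * ((n + 1) / 2) ≤ t) ∧
    (∀ m : ℕ, n = 2 * m + 1 → t ≤ (m + 1) ^ 2 - 1 →
      ¬ ∃ Y : Matrix (Fin n) (Fin n) ℤ, IsInteriorPoint n t Y) ∧
    (∀ m : ℕ, n = 2 * m → t ≤ m * (m + 1) - 1 →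
      ¬ ∃ Y : Matrix (Fin n) (Fin n) ℤ, IsInteriorPoint n t Y) := by
  have bound : (∃ Y : Matrix (Fin n) (Fin n) ℤ, IsInteriorPoint n t Y) →
      (n + 2) / 2 * ((n + 1) / 2) ≤ t := fun ⟨_, hY⟩ => hY.threshold_le
  refine ⟨bound, ?_, ?_⟩
  · rintro m rfl hle hY
    have := bound hY
    rw [show (2 * m + 1 + 2) / 2 = m + 1 by omega, show (2 * m + 1 + 1) / 2 = m + 1 by omega,
      ← sq] at this
    omega
  · rintro m rfl hle hY
    have := bound hY
    rw [show (2 * m + 2) / 2 = m + 1 by omega, show (2 * m + 1) / 2 = m by omega,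
      mul_comm] at this
    omega

/-- If an `n × n` integer matrix `Y` as above exists, then
`t ≥ ⌈(n+1)/2⌉ * ⌊(n+1)/2⌋`; in particular, for odd `n = 2m + 1` no such matrix
exists when `t ≤ (m+1)^2 - 1`, and for even `n = 2m` no such matrix exists when
`t ≤ m * (m+1) - 1`. -/
theorem interior_point_threshold (n : ℕ) (hn : 2 ≤ n) (t : ℕ) (ht : 1 ≤ t) :
    ((∃ Y : Matrix (Fin n) (Fin n) ℤ, IsInteriorPoint n t Y) →
      (n + 2) / 2 * ((n + 1) / 2) ≤ t) ∧
    (∀ m : ℕ, n = 2 * m + 1 → t ≤ (m + 1) ^ 2 - 1 →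
      ¬ ∃ Y : Matrix (Fin n) (Fin n) ℤ, IsInteriorPoint n t Y) ∧
    (∀ m : ℕ, n = 2 * m → t ≤ m * (m + 1) - 1 →
      ¬ ∃ Y : Matrix (Fin n) (Fin n) ℤ, IsInteriorPoint n t Y) :=
  interior_point_threshold_general n t ht
end

section
/- For every integer n ≥ 2, the convex hull P_n of T_n equals the set of all n×n real doubly stochastic matrices Y (nonnegative entries, all row sums 1, all column sums 1) satisfying Y_{ij} = 0 for all j ≥ i+2. -/
/-- `T n` is the set of `n × n` permutation matrices `π` (with real entries)
such that `π i j = 0` whenever `j ≥ i + 2` (`0`-based indices, matching the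
`1`-based condition in the paper, which is equivalent to `σ i ≤ i + 1` for the
underlying permutation `σ`). -/
def T (n : ℕ) : Set (Matrix (Fin n) (Fin n) ℝ) :=
  {M | ∃ σ : Equiv.Perm (Fin n),
    (∀ i : Fin n, (σ i : ℕ) ≤ (i : ℕ) + 1) ∧
    M = Matrix.of fun i j => if σ i = j then (1 : ℝ) else 0}

/-- `P n` is the convex hull of `T n`. -/
def P (n : ℕ) : Set (Matrix (Fin n) (Fin n) ℝ) := convexHull ℝ (T n)

/-!
Birkhoff's theorem survives restriction to any zero pattern: write a doubly stochastic `Y` as a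
convex combination `∑ w σ • σ.permMatrix` of permutation matrices. Each weight is bounded by the
entries it contributes to, `w σ ≤ Y i (σ i)`, so a permutation with positive weight only visits
positions where `Y` may be nonzero. Discarding the permutations of weight zero therefore exhibits
`Y` as a convex combination of permutation matrices obeying the pattern, here `σ i ≤ i + 1`.
-/

open Finset Equiv

namespace Matrix

variable {R n : Type*}

def supportedOn (R : Type*) [Semiring R] (p : n → n → Prop) : Submodule R (Matrix n n R) where
  carrier := {M | ∀ i j, ¬ p i j → M i j = 0}
  add_mem' hM hN i j hij := by simp [hM i j hij, hN i j hij]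
  zero_mem' _ _ _ := rfl
  smul_mem' c M hM i j hij := by simp [hM i j hij]

@[simp]
theorem mem_supportedOn [Semiring R] {p : n → n → Prop} {M : Matrix n n R} :
    M ∈ supportedOn R p ↔ ∀ i j, ¬ p i j → M i j = 0 :=
  Iff.rfl

section DecidableEq

variable [DecidableEq n]

theorem permMatrix_apply [Zero R] [One R] (σ : Perm n) (i j : n) :
    σ.permMatrix R i j = if σ i = j then 1 else 0 := by
  simp [PEquiv.toMatrix_apply, toPEquiv_apply]

theorem permMatrix_mem_supportedOn_iff [Semiring R] [Nontrivial R] {p : n → n → Prop}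
    {σ : Perm n} : σ.permMatrix R ∈ supportedOn R p ↔ ∀ i, p i (σ i) := by
  refine ⟨fun h i => by_contra fun hi => ?_, fun h i j hij => ?_⟩
  · simpa [permMatrix_apply] using h i (σ i) hi
  · rw [permMatrix_apply, if_neg (by rintro rfl; exact hij (h i))]

variable [Fintype n]

theorem le_apply_of_sum_smul_permMatrix_eq [Semiring R] [PartialOrder R] [IsOrderedRing R]
    {w : Perm n → R} (hw : ∀ σ, 0 ≤ w σ) {M : Matrix n n R}
    (hM : ∑ σ, w σ • σ.permMatrix R = M) (σ : Perm n) (i : n) : w σ ≤ M i (σ i) := by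
  have hterm : ∀ τ : Perm n, 0 ≤ w τ * τ.permMatrix R i (σ i) := fun τ =>
    mul_nonneg (hw τ) (by rw [permMatrix_apply]; split_ifs <;> simp)
  calc w σ = w σ * σ.permMatrix R i (σ i) := by simp
    _ ≤ ∑ τ, w τ * τ.permMatrix R i (σ i) :=
      single_le_sum (fun τ _ => hterm τ) (mem_univ σ)
    _ = M i (σ i) := by simp [← hM, sum_apply]

variable [Field R] [LinearOrder R] [IsStrictOrderedRing R]

theorem convexHull_permMatrix_eq_doublyStochastic_inter_supportedOn (p : n → n → Prop) :
    convexHull R {M | ∃ σ : Perm n, (∀ i, p i (σ i)) ∧ σ.permMatrix R = M} =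
      (doublyStochastic R n : Set (Matrix n n R)) ∩ supportedOn R p := by
  refine subset_antisymm (convexHull_min ?_ ?_) ?_
  · rintro _ ⟨σ, hσ, rfl⟩
    exact ⟨permMatrix_mem_doublyStochastic, permMatrix_mem_supportedOn_iff.2 hσ⟩
  · exact convex_doublyStochastic.inter (supportedOn R p).convex
  · rintro M ⟨hM, hMp⟩
    obtain ⟨w, hw0, hw1, hwM⟩ := exists_eq_sum_perm_of_mem_doublyStochastic hM
    have hsupp : ∀ σ, w σ ≠ 0 → ∀ i, p i (σ i) := fun σ hσ i => by_contra fun hi =>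
      hσ <| le_antisymm ((le_apply_of_sum_smul_permMatrix_eq hw0 hwM σ i).trans_eq (hMp i _ hi))
        (hw0 σ)
    rw [← hwM, ← centerMass_eq_of_sum_1 _ _ hw1, ← centerMass_filter_ne_zero]
    refine centerMass_mem_convexHull _ (fun σ _ => hw0 σ) ?_ fun σ hσ => ?_
    · rw [sum_filter_ne_zero, hw1]
      exact one_pos
    · exact ⟨σ, hsupp σ (mem_filter.1 hσ).2, rfl⟩

end DecidableEq

end Matrix

open Matrix

theorem P_eq_doublyStochastic_general (n : ℕ) :
    P n = {Y : Matrix (Fin n) (Fin n) ℝ |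
      (∀ i j : Fin n, 0 ≤ Y i j) ∧
      (∀ i : Fin n, ∑ j, Y i j = 1) ∧
      (∀ j : Fin n, ∑ i, Y i j = 1) ∧
      (∀ i j : Fin n, (i : ℕ) + 2 ≤ (j : ℕ) → Y i j = 0)} := by
  have hT : T n = {M | ∃ σ : Perm (Fin n), (∀ i, (σ i : ℕ) ≤ i + 1) ∧ σ.permMatrix ℝ = M} := by
    have hπ (σ : Perm (Fin n)) :
        (of fun i j => if σ i = j then (1 : ℝ) else 0) = σ.permMatrix ℝ := by
      ext i j
      simp
    ext M
    simp only [T, Set.mem_ofPred_eq, hπ, eq_comm (a := M)]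
  rw [P, hT, convexHull_permMatrix_eq_doublyStochastic_inter_supportedOn
    fun i j : Fin n => (j : ℕ) ≤ i + 1]
  ext Y
  simp only [Set.mem_inter_iff, SetLike.mem_coe, mem_doublyStochastic_iff_sum, mem_supportedOn,
    not_le, and_assoc]
  rfl

/-- For every `n ≥ 2`, the polytope `P n` equals the set of all `n × n` real
doubly stochastic matrices `Y` satisfying `Y i j = 0` for all `j ≥ i + 2`. -/
theorem P_eq_doublyStochastic (n : ℕ) (hn : 2 ≤ n) :
    P n = {Y : Matrix (Fin n) (Fin n) ℝ |
      (∀ i j : Fin n, 0 ≤ Y i j) ∧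
      (∀ i : Fin n, ∑ j, Y i j = 1) ∧
      (∀ j : Fin n, ∑ i, Y i j = 1) ∧
      (∀ i j : Fin n, (i : ℕ) + 2 ≤ (j : ℕ) → Y i j = 0)} :=
  P_eq_doublyStochastic_general n
end

section
/- Let n ≥ 2 and t ≥ 0 be integers. An n×n integer matrix Z lies in the dilate t·P_n (i.e., the real matrix Z belongs to the set {t·Y : Y ∈ P_n}) if and only if Z has nonnegative entries, Z_{ij} = 0 for all j ≥ i+2, and all row sums and all column sums of Z equal t. -/
/-! Birkhoff's theorem refines to faces: a doubly stochastic matrix `M` is a convex combination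
of permutation matrices, and every permutation `σ` with positive weight satisfies
`w σ ≤ M i (σ i)`, so only permutations inside the support of `M` occur. Hence the doubly
stochastic matrices vanishing outside a pattern `p` are exactly the convex hull of the permutation
matrices inside `p`. For the staircase pattern `j ≤ i + 1` this describes `P n`, and scaling by
`t` gives the theorem. -/

open Finset

lemma Equiv.Perm.permMatrix_apply_eq_ite {n R : Type*} [DecidableEq n] [Zero R] [One R]
    (σ : Equiv.Perm n) (i j : n) : σ.permMatrix R i j = if σ i = j then 1 else 0 := by
  simp [Equiv.toPEquiv_apply]

lemma convex_setOf_eq_zero_off {n R : Type*} [Semiring R] [PartialOrder R] (p : n → n → Prop) :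
    Convex R {M : Matrix n n R | ∀ i j, ¬ p i j → M i j = 0} := by
  intro M hM N hN a b _ _ _ i j hij
  simp [hM i j hij, hN i j hij]

section Birkhoff

variable {R n : Type*} [Fintype n] [DecidableEq n] [Field R] [LinearOrder R]
  [IsStrictOrderedRing R]

variable (R) in
def permMatricesWithin (p : n → n → Prop) : Set (Matrix n n R) :=
  (fun σ : Equiv.Perm n => σ.permMatrix R) '' {σ | ∀ i, p i (σ i)}

lemma le_sum_smul_permMatrix_apply {w : Equiv.Perm n → R} (hw : ∀ τ, 0 ≤ w τ)
    (σ : Equiv.Perm n) (i : n) : w σ ≤ (∑ τ, w τ • τ.permMatrix R) i (σ i) := by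
  simp only [Matrix.sum_apply, Matrix.smul_apply, Equiv.Perm.permMatrix_apply_eq_ite, smul_eq_mul,
    mul_ite, mul_one, mul_zero]
  simpa using single_le_sum (f := fun τ => if τ i = σ i then w τ else 0)
    (fun τ _ => by split_ifs <;> simp [hw]) (mem_univ σ)

lemma mem_convexHull_permMatricesWithin_support {M : Matrix n n R}
    (hM : M ∈ doublyStochastic R n) :
    M ∈ convexHull R (permMatricesWithin R fun i j => 0 < M i j) := by
  obtain ⟨w, hw₀, hw₁, hwM⟩ := exists_eq_sum_perm_of_mem_doublyStochastic hM
  have hsupp : ∀ σ, w σ ≠ 0 → ∀ i, 0 < M i (σ i) := fun σ hσ i =>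
    ((hw₀ σ).lt_of_ne' hσ).trans_le (hwM ▸ le_sum_smul_permMatrix_apply hw₀ σ i)
  have hfilter : ∑ σ with w σ ≠ 0, w σ • σ.permMatrix R = M := by
    rw [sum_filter_of_ne (p := fun σ => w σ ≠ 0) fun σ _ h hw => h (by simp [hw]), hwM]
  rw [← sum_filter_ne_zero univ] at hw₁
  have hmem := (convex_convexHull R (permMatricesWithin R fun i j => 0 < M i j)).sum_mem
    (fun σ _ => hw₀ σ) hw₁ fun σ hσ => subset_convexHull R _ ⟨σ, hsupp σ (mem_filter.1 hσ).2, rfl⟩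
  rwa [hfilter] at hmem

theorem convexHull_permMatricesWithin (p : n → n → Prop) :
    convexHull R (permMatricesWithin R p) =
      {M | M ∈ doublyStochastic R n ∧ ∀ i j, ¬ p i j → M i j = 0} := by
  apply subset_antisymm
  · refine convexHull_min ?_ (convex_doublyStochastic.inter (convex_setOf_eq_zero_off p))
    rintro _ ⟨σ, hσ, rfl⟩
    refine ⟨permMatrix_mem_doublyStochastic, fun i j hij => ?_⟩
    show σ.permMatrix R i j = 0
    rw [Equiv.Perm.permMatrix_apply_eq_ite, if_neg]
    rintro rfl
    exact hij (hσ i)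
  · rintro M ⟨hM, hMp⟩
    refine convexHull_mono ?_ (mem_convexHull_permMatricesWithin_support hM)
    rintro _ ⟨σ, hσ, rfl⟩
    refine ⟨σ, fun i => ?_, rfl⟩
    by_contra h
    exact (hσ i).ne' (hMp i (σ i) h)

theorem exists_mem_convexHull_permMatricesWithin_smul_eq_iff {p : n → n → Prop}
    (hp : ∃ σ : Equiv.Perm n, ∀ i, p i (σ i)) {s : R} (hs : 0 ≤ s) (M : Matrix n n R) :
    (∃ Y ∈ convexHull R (permMatricesWithin R p), s • Y = M) ↔
      (∀ i j, 0 ≤ M i j) ∧ (∀ i j, ¬ p i j → M i j = 0) ∧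
        (∀ i, ∑ j, M i j = s) ∧ ∀ j, ∑ i, M i j = s := by
  constructor
  · rintro ⟨Y, hY, rfl⟩
    obtain ⟨hY, hYp⟩ := (convexHull_permMatricesWithin p).subset hY
    obtain ⟨h₀, hrow, hcol⟩ := (exists_mem_doublyStochastic_eq_smul_iff hs).1 ⟨Y, hY, rfl⟩
    exact ⟨h₀, fun i j hij => by simp [hYp i j hij], hrow, hcol⟩
  · rintro ⟨h₀, hMp, hrow, hcol⟩
    obtain ⟨Y, hY, rfl⟩ := (exists_mem_doublyStochastic_eq_smul_iff hs).2 ⟨h₀, hrow, hcol⟩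
    rcases hs.eq_or_lt with rfl | hs
    · obtain ⟨σ, hσ⟩ := hp
      exact ⟨σ.permMatrix R, subset_convexHull R _ ⟨σ, hσ, rfl⟩, by simp⟩
    · refine ⟨Y, (convexHull_permMatricesWithin p).symm.subset ⟨hY, fun i j hij => ?_⟩, rfl⟩
      simpa [hs.ne'] using hMp i j hij

end Birkhoff

lemma T_eq_permMatricesWithin (n : ℕ) :
    T n = permMatricesWithin ℝ fun i j : Fin n => (j : ℕ) < i + 2 := by
  ext M
  constructor <;> rintro ⟨σ, hσ, rfl⟩ <;>
    exact ⟨σ, fun i => by have := hσ i; omega, Matrix.ext fun i j => by simp⟩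

theorem mem_dilate_iff_general (n : ℕ) (t : ℕ)
    (Z : Matrix (Fin n) (Fin n) ℤ) :
    (∃ Y ∈ P n, (t : ℝ) • Y = Matrix.of fun i j => (Z i j : ℝ)) ↔
      ((∀ i j : Fin n, 0 ≤ Z i j) ∧
       (∀ i j : Fin n, (i : ℕ) + 2 ≤ (j : ℕ) → Z i j = 0) ∧
       (∀ i : Fin n, ∑ j, Z i j = (t : ℤ)) ∧
       (∀ j : Fin n, ∑ i, Z i j = (t : ℤ))) := by
  rw [P, T_eq_permMatricesWithin, exists_mem_convexHull_permMatricesWithin_smul_eq_iff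
    ⟨1, fun i => by simp⟩ t.cast_nonneg]
  simp only [Matrix.of_apply, not_lt, Int.cast_eq_zero]
  norm_cast

/-- Let `n ≥ 2`, `t ≥ 0`.  An `n × n` integer matrix `Z` lies in the dilate
`t • P n` (i.e. the real matrix with entries `Z i j` belongs to
`{t • Y | Y ∈ P n}`) if and only if `Z` has nonnegative entries, `Z i j = 0`
for `j ≥ i + 2`, and all row and column sums of `Z` equal `t`. -/
theorem mem_dilate_iff (n : ℕ) (hn : 2 ≤ n) (t : ℕ)
    (Z : Matrix (Fin n) (Fin n) ℤ) :
    (∃ Y ∈ P n, (t : ℝ) • Y = Matrix.of fun i j => (Z i j : ℝ)) ↔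
      ((∀ i j : Fin n, 0 ≤ Z i j) ∧
       (∀ i j : Fin n, (i : ℕ) + 2 ≤ (j : ℕ) → Z i j = 0) ∧
       (∀ i : Fin n, ∑ j, Z i j = (t : ℤ)) ∧
       (∀ j : Fin n, ∑ i, Z i j = (t : ℤ))) :=
  mem_dilate_iff_general n t Z
end

section
/- For every integer n ≥ 2, the polytope P_n has dimension n(n−1)/2; that is, the affine span of T_n in the space of n×n real matrices has dimension (as the rank of its direction subspace) equal to the binomial coefficient C(n,2). -/
open Matrix Equiv Module

theorem Fintype.card_subtype_fst_lt_snd (α : Type*) [Fintype α] [LinearOrder α] :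
    Fintype.card {p : α × α // p.1 < p.2} = (Fintype.card α).choose 2 := by
  rw [Fintype.card_subtype, Fintype.card_product_filter_lt]

namespace Fin

variable {n : ℕ}

theorem val_cycleIcc_le (a b k : Fin n) : (cycleIcc a b k : ℕ) ≤ k + 1 := by
  have := k.neZero
  rcases lt_or_ge k a with hka | hak
  · rw [cycleIcc_of_lt hka]; omega
  rcases lt_or_ge b k with hbk | hkb
  · rw [cycleIcc_of_gt hbk]; omega
  rw [cycleIcc_of_le_of_le hak hkb]
  split_ifs
  · omega
  · rw [val_add, val_one']
    exact (Nat.mod_le _ _).trans (by have := Nat.mod_le 1 n; omega)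

theorem cycleIcc_eq_of_lt {a b i j : Fin n} (hab : a < b) (hji : j < i) :
    cycleIcc a b i = j ↔ i = b ∧ j = a := by
  have := i.neZero
  rcases lt_or_ge i a with hia | hai
  · rw [cycleIcc_of_lt hia]; omega
  rcases lt_or_ge b i with hbi | hib
  · rw [cycleIcc_of_gt hbi]; omega
  rcases hib.lt_or_eq with hib | rfl
  · rw [cycleIcc_of_ge_of_lt hai hib, Fin.ext_iff, val_add_one_of_lt' (by omega)]; omega
  · rw [cycleIcc_of_last hai]; omega

end Fin

namespace Matrix

variable {n : ℕ}

theorem eq_zero_of_sum_eq_zero_of_bidiagonal {α : Type*} [AddCommMonoid α]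
    {N : Matrix (Fin n) (Fin n) α}
    (hupper : ∀ i j : Fin n, (i : ℕ) + 2 ≤ j → N i j = 0)
    (hlower : ∀ i j : Fin n, j < i → N i j = 0)
    (hrow : ∀ i, ∑ j, N i j = 0) (hcol : ∀ j, ∑ i, N i j = 0) : N = 0 := by
  ext i j
  rw [zero_apply]
  induction j using WellFoundedLT.induction generalizing i with
  | ind j ih =>
    have hoff : ∀ i ≠ j, N i j = 0 := by
      intro i hij
      rcases lt_or_gt_of_ne hij with hij | hji
      · by_cases hsucc : (i : ℕ) + 1 = j
        · -- the superdiagonal entry is all that is left of row `i`, as `N i i = 0` by induction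
          rw [← hrow i, Fintype.sum_eq_single j]
          intro k hkj
          rcases lt_trichotomy k i with hki | rfl | hik
          · exact hlower i k hki
          · exact ih k hij k
          · exact hupper i k (by omega)
        · exact hupper i j (by omega)
      · exact hlower i j hji
    by_cases hij : i = j
    · rw [hij, ← hcol j, Fintype.sum_eq_single j hoff]
    · exact hoff i hij

def lowerHessenbergZeroSum (R : Type*) [Semiring R] (n : ℕ) :
    Submodule R (Matrix (Fin n) (Fin n) R) where
  carrier := {N | (∀ i j : Fin n, (i : ℕ) + 2 ≤ j → N i j = 0) ∧
    (∀ i, ∑ j, N i j = 0) ∧ ∀ j, ∑ i, N i j = 0}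
  add_mem' := by
    rintro N N' ⟨hN, hNrow, hNcol⟩ ⟨hN', hN'row, hN'col⟩
    refine ⟨fun i j h => ?_, fun i => ?_, fun j => ?_⟩
    · rw [add_apply, hN i j h, hN' i j h, add_zero]
    · simp only [add_apply, Finset.sum_add_distrib, hNrow, hN'row, add_zero]
    · simp only [add_apply, Finset.sum_add_distrib, hNcol, hN'col, add_zero]
  zero_mem' :=
    ⟨fun _ _ _ => rfl, fun _ => Finset.sum_const_zero, fun _ => Finset.sum_const_zero⟩
  smul_mem' := by
    rintro c N ⟨hN, hNrow, hNcol⟩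
    refine ⟨fun i j h => ?_, fun i => ?_, fun j => ?_⟩
    · rw [smul_apply, hN i j h, smul_zero]
    · simp only [smul_apply, ← Finset.smul_sum, hNrow, smul_zero]
    · simp only [smul_apply, ← Finset.smul_sum, hNcol, smul_zero]

def strictLowerEntries (R : Type*) [Semiring R] (n : ℕ) :
    Matrix (Fin n) (Fin n) R →ₗ[R] ({p : Fin n × Fin n // p.1 < p.2} → R) where
  toFun N p := N p.1.2 p.1.1
  map_add' _ _ := rfl
  map_smul' _ _ := rfl

theorem finrank_lowerHessenbergZeroSum_le (K : Type*) [Field K] (n : ℕ) :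
    finrank K (lowerHessenbergZeroSum K n) ≤ n.choose 2 := by
  have hinj :
      Function.Injective ((strictLowerEntries K n).domRestrict (lowerHessenbergZeroSum K n)) := by
    refine (injective_iff_map_eq_zero _).mpr fun ⟨N, hNupper, hNrow, hNcol⟩ hN => Subtype.ext ?_
    refine eq_zero_of_sum_eq_zero_of_bidiagonal hNupper (fun i j hji => ?_) hNrow hNcol
    exact congrFun hN ⟨(j, i), hji⟩
  calc finrank K (lowerHessenbergZeroSum K n)
      ≤ finrank K ({p : Fin n × Fin n // p.1 < p.2} → K) :=
        LinearMap.finrank_le_finrank_of_injective hinj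
    _ = n.choose 2 := by
      rw [finrank_fintype_fun_eq_card, Fintype.card_subtype_fst_lt_snd, Fintype.card_fin]

theorem permMatrix_eq_of {R : Type*} [Semiring R] (σ : Perm (Fin n)) :
    σ.permMatrix R = of fun i j => if σ i = j then 1 else 0 := by
  ext i j
  simp [Perm.permMatrix, PEquiv.toMatrix_apply]

def cycleIccSubOne (R : Type*) [Ring R] (n : ℕ) (p : {p : Fin n × Fin n // p.1 < p.2}) :
    Matrix (Fin n) (Fin n) R :=
  (Fin.cycleIcc p.1.1 p.1.2).permMatrix R - 1

theorem strictLowerEntries_cycleIccSubOne (R : Type*) [Ring R]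
    (p : {p : Fin n × Fin n // p.1 < p.2}) :
    strictLowerEntries R n (cycleIccSubOne R n p) = Pi.single p 1 := by
  ext q
  change (Fin.cycleIcc p.1.1 p.1.2).permMatrix R q.1.2 q.1.1 - (1 : Matrix _ _ R) q.1.2 q.1.1 = _
  rw [permMatrix_eq_of, of_apply, one_apply_ne q.2.ne', sub_zero, Pi.single_apply]
  simp only [Fin.cycleIcc_eq_of_lt p.2 q.2, Subtype.ext_iff, Prod.ext_iff, and_comm]

theorem linearIndependent_cycleIccSubOne (R : Type*) [Ring R] :
    LinearIndependent R (cycleIccSubOne R n) := by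
  have h : strictLowerEntries R n ∘ cycleIccSubOne R n = Pi.basisFun R _ := by
    ext1 p
    rw [Function.comp_apply, strictLowerEntries_cycleIccSubOne, Pi.basisFun_apply]
  exact .of_comp (strictLowerEntries R n) (h ▸ (Pi.basisFun R _).linearIndependent)

end Matrix

section T

variable {n : ℕ}

theorem permMatrix_mem_T {σ : Perm (Fin n)} (hσ : ∀ i, (σ i : ℕ) ≤ i + 1) :
    σ.permMatrix ℝ ∈ T n :=
  ⟨σ, hσ, permMatrix_eq_of σ⟩

theorem one_mem_T : (1 : Matrix (Fin n) (Fin n) ℝ) ∈ T n := by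
  simpa using permMatrix_mem_T (σ := 1) fun i => Nat.le_succ i

theorem doublyStochastic_of_mem_T {M : Matrix (Fin n) (Fin n) ℝ} (hM : M ∈ T n) :
    M ∈ doublyStochastic ℝ (Fin n) := by
  obtain ⟨σ, -, rfl⟩ := hM
  rw [← permMatrix_eq_of σ]
  exact permMatrix_mem_doublyStochastic

theorem apply_eq_zero_of_mem_T {M : Matrix (Fin n) (Fin n) ℝ} (hM : M ∈ T n) {i j : Fin n}
    (hij : (i : ℕ) + 2 ≤ j) : M i j = 0 := by
  obtain ⟨σ, hσ, rfl⟩ := hM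
  have : σ i ≠ j := fun h => by have := hσ i; omega
  simp [this]

theorem sub_mem_lowerHessenbergZeroSum {M M' : Matrix (Fin n) (Fin n) ℝ} (hM : M ∈ T n)
    (hM' : M' ∈ T n) : M - M' ∈ lowerHessenbergZeroSum ℝ n := by
  refine ⟨fun i j hij => ?_, fun i => ?_, fun j => ?_⟩
  · rw [Matrix.sub_apply, apply_eq_zero_of_mem_T hM hij, apply_eq_zero_of_mem_T hM' hij,
      sub_zero]
  · simp only [Matrix.sub_apply, Finset.sum_sub_distrib,
      sum_row_of_mem_doublyStochastic (doublyStochastic_of_mem_T hM),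
      sum_row_of_mem_doublyStochastic (doublyStochastic_of_mem_T hM'), sub_self]
  · simp only [Matrix.sub_apply, Finset.sum_sub_distrib,
      sum_col_of_mem_doublyStochastic (doublyStochastic_of_mem_T hM),
      sum_col_of_mem_doublyStochastic (doublyStochastic_of_mem_T hM'), sub_self]

theorem vectorSpan_T_le : vectorSpan ℝ (T n) ≤ lowerHessenbergZeroSum ℝ n := by
  rw [vectorSpan_def, Submodule.span_le]
  rintro _ ⟨M, hM, M', hM', rfl⟩
  exact sub_mem_lowerHessenbergZeroSum hM hM'

theorem choose_two_le_finrank_vectorSpan_T :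
    n.choose 2 ≤ finrank ℝ (vectorSpan ℝ (T n)) := by
  have hspan : Submodule.span ℝ (Set.range (cycleIccSubOne ℝ n)) ≤ vectorSpan ℝ (T n) :=
    Submodule.span_le.mpr <| Set.range_subset_iff.mpr fun p =>
      vsub_mem_vectorSpan ℝ (permMatrix_mem_T (Fin.val_cycleIcc_le _ _)) one_mem_T
  calc n.choose 2 = finrank ℝ (Submodule.span ℝ (Set.range (cycleIccSubOne ℝ n))) := by
        rw [finrank_span_eq_card (linearIndependent_cycleIccSubOne ℝ),
          Fintype.card_subtype_fst_lt_snd, Fintype.card_fin]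
    _ ≤ finrank ℝ (vectorSpan ℝ (T n)) := Submodule.finrank_mono hspan

end T

theorem dim_P_general (n : ℕ) :
    Module.finrank ℝ (affineSpan ℝ (T n)).direction = n.choose 2 := by
  rw [direction_affineSpan]
  exact le_antisymm ((Submodule.finrank_mono vectorSpan_T_le).trans
    (finrank_lowerHessenbergZeroSum_le ℝ n)) choose_two_le_finrank_vectorSpan_T

/-- For every `n ≥ 2`, the polytope `P n = conv(T n)` has dimension
`n(n-1)/2`: the direction of the affine span of `T n` has rank `C(n,2)`. -/
theorem dim_P (n : ℕ) (hn : 2 ≤ n) :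
    Module.finrank ℝ (affineSpan ℝ (T n)).direction = n.choose 2 :=
  dim_P_general n
end

section
/- Let n ≥ 2 and let Y and Y′ be two matrices in P_n. If Y_{ij} = Y′_{ij} for all pairs (i,j) with 1 ≤ j ≤ i ≤ n−1, then Y = Y′. In other words, a point of P_n is uniquely determined by its entries in positions (i,j) with j ≤ i ≤ n−1, the remaining 2n−1 entries y_{12}, y_{23}, ..., y_{n−1,n} and y_{n1}, ..., y_{nn} being determined by them. -/
lemma P_props (n : ℕ) (Y : Matrix (Fin n) (Fin n) ℝ) (hY : Y ∈ P n) :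
    (∀ i j : Fin n, (i : ℕ) + 2 ≤ (j : ℕ) → Y i j = 0) ∧
    (∀ i : Fin n, ∑ j, Y i j = 1) ∧
    (∀ j : Fin n, ∑ i, Y i j = 1) := by
  have hsub : P n ⊆ {M : Matrix (Fin n) (Fin n) ℝ |
      (∀ i j : Fin n, (i : ℕ) + 2 ≤ (j : ℕ) → M i j = 0) ∧
      (∀ i : Fin n, ∑ j, M i j = 1) ∧
      (∀ j : Fin n, ∑ i, M i j = 1)} := by
    apply convexHull_min
    · rintro M ⟨σ, hσ, rfl⟩
      refine ⟨?_, ?_, ?_⟩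
      · intro i j hij
        simp only [Matrix.of_apply, ite_eq_right_iff]
        intro hs
        have h1 := hσ i
        rw [hs] at h1
        omega
      · intro i
        simp [Finset.sum_ite_eq]
      · intro j
        simp only [Matrix.of_apply]
        have : ∀ i : Fin n, (σ i = j) = (i = σ.symm j) := by
          intro i
          simp [Equiv.apply_eq_iff_eq_symm_apply]
        simp only [this]
        simp [Finset.sum_ite_eq']
    · intro M hM N hN a b ha hb hab
      obtain ⟨hM0, hMr, hMc⟩ := hM
      obtain ⟨hN0, hNr, hNc⟩ := hN
      refine ⟨?_, ?_, ?_⟩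
      · intro i j hij
        simp [Matrix.add_apply, Matrix.smul_apply, hM0 i j hij, hN0 i j hij]
      · intro i
        simp only [Matrix.add_apply, Matrix.smul_apply, smul_eq_mul]
        rw [Finset.sum_add_distrib, ← Finset.mul_sum, ← Finset.mul_sum,
          hMr i, hNr i]
        simpa using hab
      · intro j
        simp only [Matrix.add_apply, Matrix.smul_apply, smul_eq_mul]
        rw [Finset.sum_add_distrib, ← Finset.mul_sum, ← Finset.mul_sum,
          hMc j, hNc j]
        simpa using hab
  exact hsub hY

/-- A point of `P n` is uniquely determined by its entries in the positions
`(i, j)` with `1 ≤ j ≤ i ≤ n - 1` (`1`-based), i.e. (in `0`-based `Fin n`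
indexing) positions with `j ≤ i` and `i ≤ n - 2`, equivalently `i + 1 < n`. -/
theorem P_determined_by_triangle (n : ℕ) (hn : 2 ≤ n)
    (Y Y' : Matrix (Fin n) (Fin n) ℝ) (hY : Y ∈ P n) (hY' : Y' ∈ P n)
    (h : ∀ i j : Fin n, (j : ℕ) ≤ (i : ℕ) → (i : ℕ) + 1 < n → Y i j = Y' i j) :
    Y = Y' := by
  obtain ⟨hz, hr, hc⟩ := P_props n Y hY
  obtain ⟨hz', hr', hc'⟩ := P_props n Y' hY'
  have key : ∀ i j : Fin n, (i : ℕ) + 1 < n → Y i j = Y' i j := by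
    intro i j hi
    rcases lt_trichotomy (j : ℕ) ((i : ℕ) + 1) with hj | hj | hj
    · exact h i j (by omega) hi
    · have h1 : Y i j + ∑ k ∈ Finset.univ.erase j, Y i k = 1 := by
        rw [Finset.add_sum_erase Finset.univ (Y i) (Finset.mem_univ j), hr i]
      have h2 : Y' i j + ∑ k ∈ Finset.univ.erase j, Y' i k = 1 := by
        rw [Finset.add_sum_erase Finset.univ (Y' i) (Finset.mem_univ j), hr' i]
      have h3 : ∑ k ∈ Finset.univ.erase j, Y i k
          = ∑ k ∈ Finset.univ.erase j, Y' i k := by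
        apply Finset.sum_congr rfl
        intro k hk
        have hkj : k ≠ j := Finset.ne_of_mem_erase hk
        have hkj' : (k : ℕ) ≠ (j : ℕ) := fun e => hkj (Fin.ext e)
        rcases le_or_gt (k : ℕ) (i : ℕ) with hk' | hk'
        · exact h i k hk' hi
        · have hge : (i : ℕ) + 2 ≤ (k : ℕ) := by omega
          rw [hz i k hge, hz' i k hge]
      linarith
    · have hge : (i : ℕ) + 2 ≤ (j : ℕ) := by omega
      rw [hz i j hge, hz' i j hge]
  ext i j
  rcases lt_or_ge ((i : ℕ) + 1) n with hi | hi
  · exact key i j hi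
  · have h1 : Y i j + ∑ k ∈ Finset.univ.erase i, Y k j = 1 := by
      rw [Finset.add_sum_erase Finset.univ (fun k => Y k j)
        (Finset.mem_univ i), hc j]
    have h2 : Y' i j + ∑ k ∈ Finset.univ.erase i, Y' k j = 1 := by
      rw [Finset.add_sum_erase Finset.univ (fun k => Y' k j)
        (Finset.mem_univ i), hc' j]
    have h3 : ∑ k ∈ Finset.univ.erase i, Y k j
        = ∑ k ∈ Finset.univ.erase i, Y' k j := by
      apply Finset.sum_congr rfl
      intro k hk
      have hki : k ≠ i := Finset.ne_of_mem_erase hk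
      have hki' : (k : ℕ) ≠ (i : ℕ) := fun e => hki (Fin.ext e)
      have hkn : (k : ℕ) < n := k.isLt
      have hin : (i : ℕ) < n := i.isLt
      exact key k j (by omega)
    linarith
end

section
/- Let n ≥ 2 and let r, s be integers with 1 ≤ r, s ≤ n and s ≤ r+1. Then P_n(r,s), the convex hull of the set of matrices π in T_n with π_{rs} = 0, is a face of P_n; that is, P_n(r,s) is an extreme subset of P_n: whenever a point of P_n(r,s) lies in the open segment between two points of P_n, both endpoints lie in P_n(r,s). -/
/-- `Pface n r s` is the convex hull of the matrices in `T n` whose `(r, s)`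
entry is `0`. -/
def Pface (n : ℕ) (r s : Fin n) : Set (Matrix (Fin n) (Fin n) ℝ) :=
  convexHull ℝ {M ∈ T n | M r s = 0}

/-!
The entry `(r, s)` is a linear functional that is nonnegative on `T n`, hence on `P n`, and
the zero set of a nonnegative linear functional is a face of any set. In a convex combination
of generators with positive weights, a vanishing value forces every generator involved to
vanish, so that face of `P n` is exactly the convex hull of the generators with zero `(r, s)`
entry, i.e. `Pface n r s`.
-/

section NonnegFunctional

variable {𝕜 E : Type*} [Field 𝕜] [LinearOrder 𝕜] [IsStrictOrderedRing 𝕜] [AddCommGroup E]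
  [Module 𝕜 E] (f : E →ₗ[𝕜] 𝕜)

lemma isExtreme_sep_apply_eq_zero {A : Set E} (hf : ∀ x ∈ A, 0 ≤ f x) :
    IsExtreme 𝕜 A {x ∈ A | f x = 0} := by
  refine ⟨Set.sep_subset _ _, ?_⟩
  rintro x₁ hx₁ x₂ hx₂ _ ⟨-, hx⟩ ⟨a, b, ha, hb, -, rfl⟩
  have hsum : a * f x₁ + b * f x₂ = 0 := by
    simpa only [map_add, map_smul, smul_eq_mul] using hx
  have h₁ := hf x₁ hx₁
  have h₂ := hf x₂ hx₂
  exact ⟨hx₁, by nlinarith [mul_nonneg hb.le h₂]⟩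

lemma apply_nonneg_of_mem_convexHull {S : Set E} (hf : ∀ x ∈ S, 0 ≤ f x) {x : E}
    (hx : x ∈ convexHull 𝕜 S) : 0 ≤ f x :=
  convexHull_min hf (convex_halfSpace_ge f.isLinear 0) hx

lemma convexHull_sep_apply_eq_zero {S : Set E} (hf : ∀ x ∈ S, 0 ≤ f x) :
    convexHull 𝕜 {x ∈ S | f x = 0} = {x ∈ convexHull 𝕜 S | f x = 0} := by
  classical
  refine subset_antisymm (fun x hx => ⟨convexHull_mono (Set.sep_subset _ _) hx,
    convexHull_min (fun _ hy => hy.2) (convex_hyperplane f.isLinear 0) hx⟩) ?_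
  rintro x ⟨hxS, hx⟩
  obtain ⟨ι, t, w, z, hw₀, hw₁, hz, rfl⟩ := (convexHull_eq S).subset hxS
  have hterms : ∀ i ∈ t, w i * f (z i) = 0 := by
    refine (Finset.sum_eq_zero_iff_of_nonneg fun i hi =>
      mul_nonneg (hw₀ i hi) (hf _ (hz i hi))).1 ?_
    simpa only [Finset.centerMass_eq_of_sum_1 _ _ hw₁, map_sum, map_smul, smul_eq_mul] using hx
  rw [← Finset.centerMass_filter_ne_zero]
  refine Finset.centerMass_mem_convexHull _ (fun i hi => hw₀ i (Finset.mem_filter.1 hi).1) ?_ ?_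
  · simp only [Finset.sum_filter_ne_zero, hw₁, zero_lt_one]
  · intro i hi
    obtain ⟨hit, hwi⟩ := Finset.mem_filter.1 hi
    exact ⟨hz i hit, (mul_eq_zero.1 (hterms i hit)).resolve_left hwi⟩

end NonnegFunctional

lemma T_entry_nonneg {n : ℕ} {M : Matrix (Fin n) (Fin n) ℝ} (hM : M ∈ T n) (i j : Fin n) :
    0 ≤ M i j := by
  obtain ⟨σ, -, rfl⟩ := hM
  simp only [Matrix.of_apply]
  split <;> norm_num

theorem Pface_isExtreme_general (n : ℕ) (r s : Fin n) :
    IsExtreme ℝ (P n) (Pface n r s) := by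
  have hT : ∀ M ∈ T n, 0 ≤ Matrix.entryLinearMap ℝ ℝ r s M := fun M hM => T_entry_nonneg hM r s
  have hPface : Pface n r s = {M ∈ P n | Matrix.entryLinearMap ℝ ℝ r s M = 0} :=
    convexHull_sep_apply_eq_zero _ hT
  rw [hPface]
  exact isExtreme_sep_apply_eq_zero _ fun M hM => apply_nonneg_of_mem_convexHull _ hT hM

/-- For `n ≥ 2` and `1 ≤ r, s ≤ n` with `s ≤ r + 1` (in `1`-based indexing,
which in `0`-based `Fin n` indexing is again `s ≤ r + 1`), the set
`P n (r, s)` is a face of `P n`, i.e. an extreme subset of `P n`. -/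
theorem Pface_isExtreme (n : ℕ) (hn : 2 ≤ n) (r s : Fin n)
    (hrs : (s : ℕ) ≤ (r : ℕ) + 1) :
    IsExtreme ℝ (P n) (Pface n r s) :=
  Pface_isExtreme_general n r s
end

section
/- Fix an integer t ≥ 1 and let π = (x_1 ≤ x_2 ≤ ... ≤ x_l) be a partition of t into l ≥ 1 positive parts; set x_{l+1} = t. For a partition σ of t, let M(π,σ) be the number of (l+1)-tuples (y_1,...,y_{l+1}) of nonnegative integers with y_i ≤ x_i for each i and y_1 + ... + y_{l+1} = t, such that the multiset of nonzero values among x_1 − y_1, ..., x_{l+1} − y_{l+1} equals the multiset of parts of σ. Then for every integer n ≥ 2, f(π,n) = Σ_σ M(π,σ)·f(σ,n−1), where the sum is over all partitions σ of t. -/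
/-!
Split an array counted by `f π n` into its first row `y` and the remaining `n - 1` rows. The first
row lives on the first `l + 1` columns, so the remaining rows have column sums `x_i - y_i` there and
`t` on the later columns. A column with residual sum `0` vanishes in every remaining row and can be
deleted; ordering the surviving first columns by their residual sums, which are the parts of the
partition `σ` recorded by `Mcoef π σ`, turns the remaining rows into an array counted by
`f σ (n - 1)`, because all deleted columns lie among the first `l + 1`, which every remaining row
covers. Grouping the first rows by `σ` gives the recurrence.
-/

/-- For a partition `π` of `t` of length `l = π.parts.card`, `xval π` is the
`(l+1)`-tuple `(x_1, …, x_l, x_{l+1})` where `x_1 ≤ ⋯ ≤ x_l` are the parts of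
`π` in increasing order and `x_{l+1} = t`. -/
def xval {t : ℕ} (π : t.Partition) (i : Fin (π.parts.card + 1)) : ℕ :=
  if (i : ℕ) < π.parts.card then (π.parts.sort (· ≤ ·)).getD (i : ℕ) 0 else t

/-- `f π n` for `n ≥ 2` is the number of left-justified arrays of `n` rows of
nonnegative integers, with rows of lengths `l+1, l+2, …, l+n-1, l+n-1`
(`l = π.parts.card`), such that the first `l` column sums are `x_1, …, x_l`,
every remaining column sum is `t`, and every row sum is `t`.  The array is
modeled as a function on `Fin n × Fin (l+n-1)` vanishing beyond the row
lengths (row `i`, `0`-based, has length `min (l+i+1) (l+n-1)`).  By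
convention `f π 1 = 1` (and `f π 0 = 1`). -/
noncomputable def f {t : ℕ} (π : t.Partition) (n : ℕ) : ℕ :=
  if n ≤ 1 then 1
  else
    Set.ncard {A : Fin n → Fin (π.parts.card + n - 1) → ℕ |
      (∀ (i : Fin n) (j : Fin (π.parts.card + n - 1)),
        min (π.parts.card + (i : ℕ) + 1) (π.parts.card + n - 1) ≤ (j : ℕ) →
          A i j = 0) ∧
      (∀ i : Fin n, ∑ j, A i j = t) ∧
      (∀ j : Fin (π.parts.card + n - 1),
        ∑ i, A i j =
          if (j : ℕ) < π.parts.card then (π.parts.sort (· ≤ ·)).getD (j : ℕ) 0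
          else t)}

/-- `Mcoef π σ` is the number of `(l+1)`-tuples `(y_1, …, y_{l+1})` of
nonnegative integers with `y_i ≤ x_i` for each `i` and `y_1 + ⋯ + y_{l+1} = t`
such that the multiset of nonzero values among `x_1 - y_1, …, x_{l+1} - y_{l+1}`
equals the multiset of parts of `σ`. -/
noncomputable def Mcoef {t : ℕ} (π σ : t.Partition) : ℕ :=
  Set.ncard {y : Fin (π.parts.card + 1) → ℕ |
    (∀ i, y i ≤ xval π i) ∧ (∑ i, y i = t) ∧
    Multiset.filter (fun z => z ≠ 0)
        (Multiset.map (fun i => xval π i - y i)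
          (Finset.univ.val : Multiset (Fin (π.parts.card + 1)))) =
      σ.parts}

open Finset Function

section IsArray

variable {ι κ : Type*} [Fintype ι] [Fintype κ]

def IsArray (off : ι → κ → Prop) (s : ℕ) (col : κ → ℕ) (A : ι → κ → ℕ) : Prop :=
  (∀ i j, off i j → A i j = 0) ∧ (∀ i, ∑ j, A i j = s) ∧ ∀ j, ∑ i, A i j = col j

variable {off : ι → κ → Prop} {s : ℕ} {col : κ → ℕ} {A : ι → κ → ℕ}

theorem IsArray.le_col (hA : IsArray off s col A) (i : ι) (j : κ) : A i j ≤ col j :=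
  hA.2.2 j ▸ single_le_sum (fun i _ => Nat.zero_le (A i j)) (mem_univ i)

theorem IsArray.le_row (hA : IsArray off s col A) (i : ι) (j : κ) : A i j ≤ s :=
  hA.2.1 i ▸ single_le_sum (fun j _ => Nat.zero_le (A i j)) (mem_univ j)

theorem IsArray.eq_zero_of_col_eq_zero (hA : IsArray off s col A) {j : κ} (hj : col j = 0)
    (i : ι) : A i j = 0 :=
  Nat.eq_zero_of_le_zero (hj ▸ hA.le_col i j)

instance IsArray.finite : Finite {A // IsArray off s col A} := by
  classical
  exact Set.Finite.to_subtype (s := {A | IsArray off s col A})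
    ((Set.finite_Iic fun _ _ => s).subset fun _ hA i j => hA.le_row i j)

end IsArray

section Extend

variable {κ κ' M : Type*} {c : κ' → κ}

theorem extend_comp_eq_self [Zero M] (hc : Injective c) {r : κ → M}
    (hr : ∀ j ∉ Set.range c, r j = 0) : extend c (r ∘ c) 0 = r := by
  funext j
  by_cases hj : j ∈ Set.range c
  · obtain ⟨j', rfl⟩ := hj
    exact hc.extend_apply _ _ _
  · rw [extend_apply' _ _ _ hj, hr j hj, Pi.zero_apply]

theorem sum_extend_zero [Fintype κ] [Fintype κ'] [AddCommMonoid M] (hc : Injective c)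
    (g : κ' → M) : ∑ j, extend c g 0 j = ∑ j', g j' :=
  (Fintype.sum_of_injective c hc g _ (fun j hj => extend_apply' g (0 : κ → M) j hj)
    fun _ => (hc.extend_apply _ _ _).symm).symm

end Extend

section Equivs

variable {κ : Type*} [Fintype κ] {s : ℕ} {col : κ → ℕ}

noncomputable def isArrayCompEquiv {ι κ' : Type*} [Fintype ι] [Fintype κ']
    {off : ι → κ → Prop} {off' : ι → κ' → Prop} {col' : κ' → ℕ} (c : κ' → κ)
    (hc : Injective c) (hcol : ∀ j ∉ Set.range c, col j = 0) (hcol' : ∀ j', col (c j') = col' j')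
    (hoff : ∀ i j', off' i j' ↔ off i (c j')) :
    {A // IsArray off s col A} ≃ {B // IsArray off' s col' B} where
  toFun A :=
    ⟨fun i => A.1 i ∘ c, fun i j' h => A.2.1 i _ ((hoff i j').1 h),
      fun i => (Fintype.sum_of_injective c hc _ (A.1 i)
        (fun j hj => A.2.eq_zero_of_col_eq_zero (hcol j hj) i) fun _ => rfl).trans (A.2.2.1 i),
      fun j' => (A.2.2.2 (c j')).trans (hcol' j')⟩
  invFun B := by
    refine ⟨fun i => extend c (B.1 i) 0, fun i j h => ?_, fun i => ?_, fun j => ?_⟩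
    · by_cases hj : j ∈ Set.range c
      · obtain ⟨j', rfl⟩ := hj
        exact (hc.extend_apply _ _ _).trans (B.2.1 i j' ((hoff i j').2 h))
      · exact extend_apply' _ _ _ hj
    · exact (sum_extend_zero hc _).trans (B.2.2.1 i)
    · by_cases hj : j ∈ Set.range c
      · obtain ⟨j', rfl⟩ := hj
        simp_rw [hc.extend_apply]
        exact (B.2.2.2 j').trans (hcol' j').symm
      · simp_rw [extend_apply' _ _ _ hj]
        exact (sum_const_zero).trans (hcol j hj).symm
  left_inv A := Subtype.ext <| funext fun i =>
    extend_comp_eq_self hc fun j hj => A.2.eq_zero_of_col_eq_zero (hcol j hj) i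
  right_inv B := Subtype.ext <| funext fun i => extend_comp hc _ _

theorem isArray_cons_iff {m : ℕ} {off : Fin (m + 1) → κ → Prop} {r : κ → ℕ}
    {B : Fin m → κ → ℕ} :
    IsArray off s col (Fin.cons r B) ↔
      ((∀ j, off 0 j → r j = 0) ∧ r ≤ col ∧ ∑ j, r j = s) ∧
        IsArray (fun i : Fin m => off i.succ) s (col - r) B := by
  simp only [IsArray, Fin.forall_fin_succ, Fin.sum_univ_succ, Fin.cons_zero, Fin.cons_succ,
    Pi.le_def, Pi.sub_apply]
  have hcol : ∀ j, r j + ∑ i, B i j = col j ↔ r j ≤ col j ∧ ∑ i, B i j = col j - r j :=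
    fun j => by omega
  simp only [hcol, forall_and]
  tauto

noncomputable def isArrayConsEquiv {κ₀ : Type*} [Fintype κ₀] {m : ℕ}
    {off : Fin (m + 1) → κ → Prop} (e : κ₀ → κ) (he : Injective e)
    (hoff : ∀ j, off 0 j ↔ j ∉ Set.range e) :
    {A // IsArray off s col A} ≃
      Σ y : {y : κ₀ → ℕ // y ≤ col ∘ e ∧ ∑ j, y j = s},
        {B // IsArray (fun i : Fin m => off i.succ) s (col - extend e y.1 0) B} where
  toFun A := by
    have hA := isArray_cons_iff.1 ((Fin.cons_self_tail A.1).symm ▸ A.2)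
    have hext : extend e (A.1 0 ∘ e) 0 = A.1 0 :=
      extend_comp_eq_self he fun j hj => A.2.1 0 j ((hoff j).2 hj)
    refine ⟨⟨A.1 0 ∘ e, fun j => hA.1.2.1 (e j), ?_⟩, ⟨Fin.tail A.1, hext ▸ hA.2⟩⟩
    exact (Fintype.sum_of_injective e he _ _ (fun j hj => A.2.1 0 j ((hoff j).2 hj))
      fun _ => rfl).trans hA.1.2.2
  invFun p := by
    refine ⟨Fin.cons (extend e p.1.1 0) p.2.1, isArray_cons_iff.2 ⟨⟨fun j hj => ?_, fun j => ?_,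
      (sum_extend_zero he _).trans p.1.2.2⟩, p.2.2⟩⟩
    · exact extend_apply' _ _ _ ((hoff j).1 hj)
    · by_cases hj : j ∈ Set.range e
      · obtain ⟨j', rfl⟩ := hj
        exact (he.extend_apply _ _ _).trans_le (p.1.2.1 j')
      · exact (extend_apply' _ _ _ hj).trans_le (Nat.zero_le _)
  left_inv A := Subtype.ext <| by
    change Fin.cons (extend e (A.1 0 ∘ e) 0) (Fin.tail A.1) = A.1
    rw [extend_comp_eq_self he fun j hj => A.2.1 0 j ((hoff j).2 hj), Fin.cons_self_tail]
  right_inv p := Sigma.subtype_ext (Subtype.ext (extend_comp he _ _)) rfl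

end Equivs

theorem card_fiber_eq_count {α γ : Type*} [Fintype α] [DecidableEq γ] (f : α → γ) (c : γ) :
    Nat.card {a // f a = c} = (univ.val.map f).count c := by
  rw [Nat.card_eq_fintype_card, Fintype.card_subtype, Multiset.count_map]
  simp only [eq_comm]
  rfl

theorem exists_equiv_apply_eq_of_map_univ_eq {α β γ : Type*} [Fintype α] [Fintype β]
    {f : α → γ} {g : β → γ} (h : univ.val.map f = univ.val.map g) :
    ∃ e : α ≃ β, ∀ a, g (e a) = f a := by
  classical
  exact ⟨Equiv.ofFiberEquiv fun c => (Finite.card_eq.1 (by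
    rw [card_fiber_eq_count, card_fiber_eq_count, h])).some, Equiv.ofFiberEquiv_map _⟩

theorem card_sigma_eq_sum_card_fiber_mul {Y S : Type*} [Finite Y] [Fintype S] (g : Y → S)
    (T : Y → Type*) [∀ y, Finite (T y)] (F : S → ℕ) (hT : ∀ y, Nat.card (T y) = F (g y)) :
    Nat.card (Σ y, T y) = ∑ s, Nat.card {y // g y = s} * F s := by
  classical
  have := Fintype.ofFinite Y
  rw [Nat.card_sigma, ← Fintype.sum_fiberwise g]
  refine sum_congr rfl fun s _ => ?_
  calc ∑ y : {y // g y = s}, Nat.card (T y) = ∑ _y : {y // g y = s}, F s :=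
        sum_congr rfl fun y _ => by rw [hT, y.2]
    _ = Nat.card {y // g y = s} * F s := by
        rw [sum_const, card_univ, smul_eq_mul, Nat.card_eq_fintype_card]

section Recurrence

variable {t : ℕ}

-- Indexed by `ℕ` so that `xval π i` unfolds to `colSum π i`.
def colSum (σ : t.Partition) (j : ℕ) : ℕ :=
  if j < σ.parts.card then (σ.parts.sort (· ≤ ·)).getD j 0 else t

def arrayShape (L m : ℕ) (i : Fin (m + 1)) (j : Fin (L + m)) : Prop :=
  min (L + i + 1) (L + m) ≤ j

abbrev Arrays (σ : t.Partition) (m : ℕ) : Type :=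
  {A // IsArray (arrayShape σ.parts.card m) t (fun j => colSum σ j) A}

theorem map_univ_colSum (σ : t.Partition) :
    univ.val.map (fun j : Fin σ.parts.card => colSum σ j) = σ.parts := by
  have hl : (σ.parts.sort (· ≤ ·)).length = σ.parts.card := Multiset.length_sort _
  have h : (fun j : Fin σ.parts.card => colSum σ j) =
      fun j : Fin σ.parts.card => (σ.parts.sort (· ≤ ·)).getD j 0 := funext fun j => if_pos j.2
  rw [h, Fin.univ_val_map]
  conv_rhs => rw [← Multiset.sort_eq σ.parts (· ≤ ·)]
  congr 1
  apply List.ext_getElem <;> simp [hl]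

theorem sum_colSum (σ : t.Partition) : ∑ j : Fin σ.parts.card, colSum σ j = t := by
  rw [sum_eq_multiset_sum, map_univ_colSum, σ.parts_sum]

theorem f_succ_eq_card (σ : t.Partition) (m : ℕ) : f σ (m + 1) = Nat.card (Arrays σ m) := by
  rcases m with _ | m
  · rw [f, if_pos le_rfl, eq_comm, Nat.card_eq_one_iff_exists]
    refine ⟨⟨fun _ j => colSum σ j, fun _ j h => ?_, fun _ => sum_colSum σ,
      fun j => Fin.sum_univ_one _⟩, fun A => Subtype.ext (funext fun i => funext fun j => ?_)⟩
    · have := j.2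
      simp only [arrayShape] at h
      omega
    · rw [Fin.fin_one_eq_zero i]
      simpa using A.2.2.2 j
  · rw [f, if_neg (by omega)]
    exact (Nat.card_coe_set_eq _).symm

abbrev FirstRow (π : t.Partition) : Type :=
  {y : Fin (π.parts.card + 1) → ℕ // y ≤ xval π ∧ ∑ i, y i = t}

instance (π : t.Partition) : Finite (FirstRow π) :=
  Set.Finite.to_subtype (s := {y | y ≤ xval π ∧ ∑ i, y i = t})
    ((Set.finite_Iic (xval π)).subset fun _ hy => hy.1)

theorem sum_xval (π : t.Partition) : ∑ i, xval π i = t + t := by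
  have hlast : xval π (Fin.last _) = t := if_neg (lt_irrefl _)
  rw [Fin.sum_univ_castSucc, hlast]
  exact congrArg (· + t) (sum_colSum π)

def residualPartition (π : t.Partition) (y : FirstRow π) : t.Partition :=
  .ofSums t (univ.val.map fun i => xval π i - y.1 i) <| by
    rw [← sum_eq_multiset_sum, sum_tsub_distrib _ fun i _ => y.2.1 i, sum_xval, y.2.2,
      Nat.add_sub_cancel]

theorem card_residualPartition_fiber (π σ : t.Partition) :
    Nat.card {y : FirstRow π // residualPartition π y = σ} = Mcoef π σ :=
  (Nat.card_congr
    { toFun := fun y => ⟨y.1.1, y.1.2.1, y.1.2.2, congrArg Nat.Partition.parts y.2⟩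
      invFun := fun y => ⟨⟨y.1, y.2.1, y.2.2.1⟩, Nat.Partition.ext y.2.2.2⟩
      left_inv := fun _ => rfl
      right_inv := fun _ => rfl }).trans (Nat.card_coe_set_eq _)

noncomputable def residualColSum (π : t.Partition) (m : ℕ) (y : Fin (π.parts.card + 1) → ℕ) :
    Fin (π.parts.card + (m + 1)) → ℕ :=
  (fun j : Fin (π.parts.card + (m + 1)) => colSum π j) - extend (Fin.castLE (by omega)) y 0

theorem residualColSum_castLE (π : t.Partition) (m : ℕ) (y : Fin (π.parts.card + 1) → ℕ)
    (i : Fin (π.parts.card + 1)) :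
    residualColSum π m y (Fin.castLE (by omega) i) = xval π i - y i := by
  rw [residualColSum, Pi.sub_apply, (Fin.castLE_injective _).extend_apply]
  rfl

theorem residualColSum_of_le (π : t.Partition) (m : ℕ) (y : Fin (π.parts.card + 1) → ℕ)
    (j : Fin (π.parts.card + (m + 1))) (hj : π.parts.card + 1 ≤ j) : residualColSum π m y j = t := by
  rw [residualColSum, Pi.sub_apply, extend_apply' _ _ _ (by rintro ⟨i, rfl⟩; simp at hj; omega),
    colSum, if_neg (by omega)]
  rfl

/-- The columns of `π`'s array that survive in the remaining rows: first the columns among the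
first `L + 1` on which `p` holds, ordered by `e`, then the last `m` columns. -/
def columnMap {L L' m : ℕ} {p : Fin (L + 1) → Prop} (e : {i // p i} ≃ Fin L') :
    Fin (L' + m) → Fin (L + (m + 1)) :=
  Fin.append (fun a => Fin.castLE (by omega) (e.symm a).1) fun b => ⟨L + 1 + b, by omega⟩

section ColumnMap

variable {L L' m : ℕ} {p : Fin (L + 1) → Prop} (e : {i // p i} ≃ Fin L')

theorem columnMap_castAdd (a : Fin L') :
    columnMap (m := m) e (Fin.castAdd m a) = Fin.castLE (by omega) (e.symm a).1 :=
  Fin.append_left _ _ _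

theorem columnMap_natAdd (b : Fin m) :
    columnMap e (Fin.natAdd L' b) = ⟨L + 1 + b, by omega⟩ :=
  Fin.append_right _ _ _

theorem columnMap_injective : Injective (columnMap (m := m) e) := by
  intro a b hab
  induction a using Fin.addCases with
  | left a =>
    induction b using Fin.addCases with
    | left b =>
      simp only [columnMap_castAdd, Fin.castLE_inj] at hab
      rw [e.symm.injective (Subtype.ext hab)]
    | right b =>
      have := (e.symm a).1.2
      simp only [columnMap_castAdd, columnMap_natAdd, Fin.ext_iff, Fin.val_castLE] at hab
      omega
  | right a =>
    induction b using Fin.addCases with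
    | left b =>
      have := (e.symm b).1.2
      simp only [columnMap_castAdd, columnMap_natAdd, Fin.ext_iff, Fin.val_castLE] at hab
      omega
    | right b =>
      simp only [columnMap_natAdd, Fin.ext_iff] at hab
      simp only [Fin.ext_iff, Fin.val_natAdd]
      omega

theorem mem_range_columnMap (j : Fin (L + (m + 1))) (hj : ∀ h : (j : ℕ) < L + 1, p ⟨j, h⟩) :
    j ∈ Set.range (columnMap (m := m) e) := by
  by_cases h : (j : ℕ) < L + 1
  · exact ⟨Fin.castAdd m (e ⟨⟨j, h⟩, hj h⟩), by rw [columnMap_castAdd, e.symm_apply_apply]; rfl⟩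
  · exact ⟨Fin.natAdd L' ⟨j - (L + 1), by omega⟩, by rw [columnMap_natAdd]; ext; simp; omega⟩

theorem arrayShape_columnMap (i : Fin (m + 1)) (j' : Fin (L' + m)) :
    arrayShape L' m i j' ↔ arrayShape L (m + 1) i.succ (columnMap e j') := by
  induction j' using Fin.addCases with
  | left a =>
    have := (e.symm a).1.2
    simp only [arrayShape, columnMap_castAdd, Fin.val_castLE, Fin.val_castAdd, Fin.val_succ]
    omega
  | right b =>
    simp only [arrayShape, columnMap_natAdd, Fin.val_natAdd, Fin.val_succ]
    omega

end ColumnMap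

theorem card_tail_eq_f (π : t.Partition) (m : ℕ) (y : FirstRow π) :
    Nat.card {B // IsArray (fun i : Fin (m + 1) => arrayShape π.parts.card (m + 1) i.succ) t
      (residualColSum π m y.1) B} = f (residualPartition π y) (m + 1) := by
  set σ := residualPartition π y
  obtain ⟨e, he⟩ := exists_equiv_apply_eq_of_map_univ_eq
    (f := fun i : {i // xval π i - y.1 i ≠ 0} => xval π i - y.1 i)
    (g := fun j : Fin σ.parts.card => colSum σ j) (by
      refine (univ_val_map_subtype_restrict (fun i => xval π i - y.1 i) _).trans ?_
      rw [filter_val, map_univ_colSum]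
      exact (Multiset.filter_map (· ≠ 0) _ _).symm)
  have hcol : ∀ j ∉ Set.range (columnMap (m := m) e), residualColSum π m y.1 j = 0 := by
    intro j hj
    by_contra h
    exact hj (mem_range_columnMap e j fun hlt => by
      rwa [← residualColSum_castLE π m])
  have hcol' : ∀ j', residualColSum π m y.1 (columnMap e j') = colSum σ j' := by
    intro j'
    induction j' using Fin.addCases with
    | left a =>
      rw [columnMap_castAdd, residualColSum_castLE, ← he, e.apply_symm_apply]
      rfl
    | right b =>
      rw [columnMap_natAdd, residualColSum_of_le _ _ _ _ (by simp), colSum, if_neg (by simp)]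
  rw [f_succ_eq_card]
  exact Nat.card_congr
    (isArrayCompEquiv _ (columnMap_injective e) hcol hcol' (arrayShape_columnMap e))

noncomputable def arraysConsEquiv (π : t.Partition) (m : ℕ) :
    Arrays π (m + 1) ≃ Σ y : FirstRow π, {B // IsArray
      (fun i : Fin (m + 1) => arrayShape π.parts.card (m + 1) i.succ) t
      (residualColSum π m y.1) B} :=
  isArrayConsEquiv (Fin.castLE (by omega)) (Fin.castLE_injective _) fun j => by
    rw [Fin.range_castLE]
    simp [arrayShape]

end Recurrence

theorem f_recurrence_general (t : ℕ) (π : t.Partition) (n : ℕ)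
    (hn : 2 ≤ n) :
    f π n = ∑ σ : t.Partition, Mcoef π σ * f σ (n - 1) := by
  obtain ⟨m, rfl⟩ : ∃ m, n = m + 2 := ⟨n - 2, by omega⟩
  rw [f_succ_eq_card, Nat.card_congr (arraysConsEquiv π m),
    card_sigma_eq_sum_card_fiber_mul (residualPartition π) _ (fun σ => f σ (m + 1))
      (card_tail_eq_f π m)]
  simp only [card_residualPartition_fiber]
  rfl

/-- For every partition `π` of `t ≥ 1` and every `n ≥ 2`,
`f π n = ∑_σ Mcoef π σ * f σ (n-1)`, the sum being over all partitions `σ`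
of `t`. -/
theorem f_recurrence (t : ℕ) (ht : 1 ≤ t) (π : t.Partition) (n : ℕ)
    (hn : 2 ≤ n) :
    f π n = ∑ σ : t.Partition, Mcoef π σ * f σ (n - 1) :=
  f_recurrence_general t π n hn
end

section
/- For every nonnegative integer t, g_t(3) = (t+1)(t+2)(t+3)/6; that is, the number of 3×3 matrices of nonnegative integers whose (i,j) entry is 0 whenever j ≥ i+2 and whose row and column sums all equal t is the binomial coefficient C(t+3, 3). -/
def mat3 (t : ℕ) (p : ℕ × ℕ × ℕ) : Matrix (Fin 3) (Fin 3) ℕ :=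
  !![t - p.2.1, p.2.1, 0;
     p.1, t - p.2.2, p.2.2 - p.1;
     p.2.1 - p.1, p.2.2 - p.2.1, t - (p.2.2 - p.1)]

def pairsF (t : ℕ) : Finset (ℕ × ℕ) :=
  (Finset.range (t+1) ×ˢ Finset.range (t+1)).filter fun p => p.1 ≤ p.2

def triplesF (t : ℕ) : Finset (ℕ × ℕ × ℕ) :=
  (Finset.range (t+1) ×ˢ Finset.range (t+1) ×ˢ Finset.range (t+1)).filter
    fun p => p.1 ≤ p.2.1 ∧ p.2.1 ≤ p.2.2

lemma pairsF_succ (t : ℕ) :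
    pairsF (t+1) = pairsF t ∪ (Finset.range (t+2)).image (fun x => (x, t+1)) := by
  ext ⟨a, b⟩
  rw [Finset.mem_union]
  simp only [pairsF, Finset.mem_filter, Finset.mem_product, Finset.mem_range]
  constructor
  · intro h
    by_cases hb : b = t + 1
    · right
      rw [Finset.mem_image]
      exact ⟨a, by rw [Finset.mem_range]; omega, by rw [hb]⟩
    · left; omega
  · rintro (h | h)
    · omega
    · rw [Finset.mem_image] at h
      obtain ⟨x, hx, heq⟩ := h
      rw [Finset.mem_range] at hx
      simp only [Prod.mk.injEq] at heq
      omega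

lemma pairsF_card (t : ℕ) : (pairsF t).card = (t+2).choose 2 := by
  induction t with
  | zero => rfl
  | succ t ih =>
    rw [pairsF_succ, Finset.card_union_of_disjoint, ih,
      Finset.card_image_of_injective _ (fun a b h => by simpa using h),
      Finset.card_range]
    · rw [show t+1+2 = (t+2)+1 from rfl, Nat.choose_succ_succ (t+2) 1,
        Nat.choose_one_right]
      ring
    · rw [Finset.disjoint_left]
      rintro ⟨a, b⟩ h1 h2
      simp [pairsF, Finset.mem_range, Prod.ext_iff] at h1 h2
      omega

lemma triplesF_succ (t : ℕ) :
    triplesF (t+1) = triplesF t ∪ (pairsF (t+1)).image (fun q => (q.1, q.2, t+1)) := by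
  ext ⟨a, b, c⟩
  rw [Finset.mem_union]
  simp only [triplesF, Finset.mem_filter, Finset.mem_product, Finset.mem_range]
  constructor
  · intro h
    by_cases hc : c = t + 1
    · right
      rw [Finset.mem_image]
      refine ⟨(a, b), ?_, by rw [hc]⟩
      simp only [pairsF, Finset.mem_filter, Finset.mem_product, Finset.mem_range]
      omega
    · left; omega
  · rintro (h | h)
    · omega
    · rw [Finset.mem_image] at h
      obtain ⟨⟨x, y⟩, hq, heq⟩ := h
      simp only [pairsF, Finset.mem_filter, Finset.mem_product, Finset.mem_range] at hq
      simp only [Prod.mk.injEq] at heq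
      omega

lemma triplesF_card (t : ℕ) : (triplesF t).card = (t+3).choose 3 := by
  induction t with
  | zero => rfl
  | succ t ih =>
    rw [triplesF_succ, Finset.card_union_of_disjoint, ih,
      Finset.card_image_of_injective _ (fun a b h => by
        simpa [Prod.ext_iff] using h), pairsF_card]
    · rw [show t+1+3 = (t+3)+1 from rfl, Nat.choose_succ_succ (t+3) 2]
      ring
    · rw [Finset.disjoint_left]
      rintro ⟨a, b, c⟩ h1 h2
      simp [triplesF, pairsF, Finset.mem_filter, Finset.mem_product, Finset.mem_range,
        Prod.ext_iff] at h1 h2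
      omega

lemma key (t : ℕ) :
    {M : Matrix (Fin 3) (Fin 3) ℕ |
      (∀ i j : Fin 3, (i : ℕ) + 2 ≤ (j : ℕ) → M i j = 0) ∧
      (∀ i : Fin 3, ∑ j, M i j = t) ∧
      (∀ j : Fin 3, ∑ i, M i j = t)} = ↑((triplesF t).image (mat3 t)) := by
  ext M
  simp only [Set.mem_setOf_eq, Finset.coe_image, Set.mem_image, Finset.mem_coe]
  constructor
  · rintro ⟨hz, hr, hc⟩
    have h02 : M 0 2 = 0 := hz 0 2 (by simp)
    have hr0 := hr 0; have hr1 := hr 1; have hr2 := hr 2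
    have hc0 := hc 0; have hc1 := hc 1; have hc2 := hc 2
    simp only [Fin.sum_univ_three] at hr0 hr1 hr2 hc0 hc1 hc2
    refine ⟨(M 1 0, M 0 1, M 1 0 + M 1 2), ?_, ?_⟩
    · simp only [triplesF, Finset.mem_filter, Finset.mem_product, Finset.mem_range]
      omega
    · ext i j
      fin_cases i <;> fin_cases j <;> simp [mat3] <;> omega
  · rintro ⟨p, hp, rfl⟩
    obtain ⟨x, y, z⟩ := p
    simp only [triplesF, Finset.mem_filter, Finset.mem_product, Finset.mem_range] at hp
    refine ⟨?_, ?_, ?_⟩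
    · intro i j hij
      fin_cases i <;> fin_cases j <;> simp_all [mat3]
    · intro i; fin_cases i <;> simp [mat3, Fin.sum_univ_three] <;> omega
    · intro j; fin_cases j <;> simp [mat3, Fin.sum_univ_three] <;> omega

lemma mat3_injOn (t : ℕ) : Set.InjOn (mat3 t) ↑(triplesF t) := by
  rintro ⟨x, y, z⟩ hp ⟨x', y', z'⟩ hq heq
  simp only [triplesF, Finset.coe_filter, Finset.mem_product, Finset.mem_range,
    Set.mem_setOf_eq] at hp hq
  have h10 := congrFun (congrFun heq 1) 0
  have h01 := congrFun (congrFun heq 0) 1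
  have h12 := congrFun (congrFun heq 1) 2
  simp [mat3] at h10 h01 h12
  simp only [Prod.mk.injEq]
  omega

/-- For every `t ≥ 0`, `g t 3 = (t+1)(t+2)(t+3)/6 = C(t+3, 3)`. -/
theorem g_three (t : ℕ) :
    6 * g t 3 = (t + 1) * (t + 2) * (t + 3) ∧ g t 3 = (t + 3).choose 3 := by
  have hcard : g t 3 = (t + 3).choose 3 := by
    rw [g, key t, Set.ncard_coe_finset, Finset.card_image_of_injOn (mat3_injOn t),
      triplesF_card]
  refine ⟨?_, hcard⟩
  rw [hcard]
  calc 6 * (t+3).choose 3 = 2 * ((t+3).choose 3 * 3) := by ring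
    _ = 2 * (Nat.succ (t+2) * (t+2).choose 2) := by rw [Nat.add_one_mul_choose_eq]
    _ = (t+3) * ((t+2).choose 2 * 2) := by rw [Nat.succ_eq_add_one]; ring
    _ = (t+3) * (Nat.succ (t+1) * (t+1).choose 1) := by rw [Nat.add_one_mul_choose_eq]
    _ = (t + 1) * (t + 2) * (t + 3) := by rw [Nat.choose_one_right, Nat.succ_eq_add_one]; ring
end

section
/- For every nonnegative integer t, g_t(4) = (t+3)(t+1)(t+2)(t+3)(t+4)(t+5)/360; that is, 360·g_t(4) = (t+3)·∏_{i=1}^{5}(t+i). -/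
open Finset in
private lemma gf_L0 (c m : ℕ) : 2 * ∑ d ∈ range m, (c + d + 1) = m * (2 * c + m + 1) := by
  induction m with
  | zero => simp
  | succ m ih => rw [Finset.sum_range_succ, Nat.mul_add, ih]; ring

open Finset in
private lemma gf_L1 (c s : ℕ) :
    6 * ∑ d ∈ range (s + 1), (s + 1 - d) * (c + d + 1)
      = (s + 1) * (s + 2) * (3 * c + s + 3) := by
  induction s with
  | zero => simp; ring
  | succ s ih =>
    have hsplit : ∑ d ∈ range (s + 2), (s + 2 - d) * (c + d + 1)
        = (∑ d ∈ range (s + 2), (s + 1 - d) * (c + d + 1))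
          + ∑ d ∈ range (s + 2), (c + d + 1) := by
      rw [← Finset.sum_add_distrib]
      apply Finset.sum_congr rfl
      intro d hd
      have : d < s + 2 := Finset.mem_range.mp hd
      have h1 : s + 2 - d = (s + 1 - d) + 1 := by omega
      rw [h1]; try ring
    have hlast : ∑ d ∈ range (s + 2), (s + 1 - d) * (c + d + 1)
        = ∑ d ∈ range (s + 1), (s + 1 - d) * (c + d + 1) := by
      rw [Finset.sum_range_succ]; simp
    rw [hsplit, hlast, Nat.mul_add, ih]
    have h0 := gf_L0 c (s + 2)
    have h6 : 6 * ∑ d ∈ range (s + 2), (c + d + 1)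
        = 3 * ((s + 2) * (2 * c + (s + 2) + 1)) := by omega
    rw [h6]; ring

open Finset in
private lemma gf_L1b (K b : ℕ) :
    2 * ∑ c ∈ range (b + 1), (b + 1 - c) * (3 * c + K)
      = (b + 1) * (b + 2) * (b + K) := by
  induction b with
  | zero => simp
  | succ b ih =>
    have hsplit : ∑ c ∈ range (b + 2), (b + 2 - c) * (3 * c + K)
        = (∑ c ∈ range (b + 2), (b + 1 - c) * (3 * c + K))
          + ∑ c ∈ range (b + 2), (3 * c + K) := by
      rw [← Finset.sum_add_distrib]
      apply Finset.sum_congr rfl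
      intro c hc
      have : c < b + 2 := Finset.mem_range.mp hc
      have h1 : b + 2 - c = (b + 1 - c) + 1 := by omega
      rw [h1]; try ring
    have hlast : ∑ c ∈ range (b + 2), (b + 1 - c) * (3 * c + K)
        = ∑ c ∈ range (b + 1), (b + 1 - c) * (3 * c + K) := by
      rw [Finset.sum_range_succ]; simp
    have harith : ∑ c ∈ range (b + 2), (3 * c + K)
        = 3 * (∑ c ∈ range (b + 2), c) + (b + 2) * K := by
      rw [Finset.sum_add_distrib, Finset.mul_sum]; simp [mul_comm]
    have hgauss : (∑ c ∈ range (b + 2), c) * 2 = (b + 2) * (b + 1) := by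
      rw [Finset.sum_range_id_mul_two]; simp
    rw [hsplit, hlast, Nat.mul_add, ih, harith]
    have h2 : 2 * (3 * (∑ c ∈ range (b + 2), c) + (b + 2) * K)
        = 3 * ((b + 2) * (b + 1)) + 2 * ((b + 2) * K) := by omega
    rw [h2]; ring

open Finset in
private lemma gf_L2 (b s : ℕ) :
    12 * ∑ c ∈ range (b + 1), ∑ d ∈ range (s + 1), (b + 1 - c) * ((s + 1 - d) * (c + d + 1))
      = (b + 1) * (b + 2) * ((s + 1) * (s + 2) * (b + s + 3)) := by
  have key : ∀ c, 12 * ∑ d ∈ range (s + 1), (b + 1 - c) * ((s + 1 - d) * (c + d + 1))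
      = ((s + 1) * (s + 2) * 2) * ((b + 1 - c) * (3 * c + (s + 3))) := by
    intro c
    have h1 := gf_L1 c s
    rw [← Finset.mul_sum]
    calc 12 * ((b + 1 - c) * ∑ d ∈ range (s + 1), (s + 1 - d) * (c + d + 1))
        = 2 * ((b + 1 - c) * (6 * ∑ d ∈ range (s + 1), (s + 1 - d) * (c + d + 1))) := by ring
      _ = 2 * ((b + 1 - c) * ((s + 1) * (s + 2) * (3 * c + s + 3))) := by rw [h1]
      _ = ((s + 1) * (s + 2) * 2) * ((b + 1 - c) * (3 * c + (s + 3))) := by ring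
  calc 12 * ∑ c ∈ range (b + 1), ∑ d ∈ range (s + 1), (b + 1 - c) * ((s + 1 - d) * (c + d + 1))
      = ∑ c ∈ range (b + 1), 12 * ∑ d ∈ range (s + 1), (b + 1 - c) * ((s + 1 - d) * (c + d + 1)) := by
        rw [Finset.mul_sum]
    _ = ∑ c ∈ range (b + 1), ((s + 1) * (s + 2) * 2) * ((b + 1 - c) * (3 * c + (s + 3))) :=
        Finset.sum_congr rfl fun c _ => key c
    _ = ((s + 1) * (s + 2) * 2) * ∑ c ∈ range (b + 1), (b + 1 - c) * (3 * c + (s + 3)) := by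
        rw [Finset.mul_sum]
    _ = (s + 1) * (s + 2) * (2 * ∑ c ∈ range (b + 1), (b + 1 - c) * (3 * c + (s + 3))) := by
        ring
    _ = (s + 1) * (s + 2) * ((b + 1) * (b + 2) * (b + (s + 3))) := by rw [gf_L1b]
    _ = (b + 1) * (b + 2) * ((s + 1) * (s + 2) * (b + s + 3)) := by ring

open Finset in
private lemma gf_L6 (m : ℕ) :
    3 * ∑ b ∈ range m, (b + 1) * (b + 2) = m * (m + 1) * (m + 2) := by
  induction m with
  | zero => simp
  | succ m ih => rw [Finset.sum_range_succ, Nat.mul_add, ih]; ring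

open Finset in
private lemma gf_L5 (m : ℕ) :
    12 * ∑ b ∈ range m, (b + 1) * (b + 2) * (m - b) = m * (m + 1) * (m + 2) * (m + 3) := by
  induction m with
  | zero => simp
  | succ m ih =>
    have hsplit : ∑ b ∈ range (m + 1), (b + 1) * (b + 2) * (m + 1 - b)
        = (∑ b ∈ range (m + 1), (b + 1) * (b + 2) * (m - b))
          + ∑ b ∈ range (m + 1), (b + 1) * (b + 2) := by
      rw [← Finset.sum_add_distrib]
      apply Finset.sum_congr rfl
      intro b hb
      have : b < m + 1 := Finset.mem_range.mp hb
      have h1 : m + 1 - b = (m - b) + 1 := by omega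
      rw [h1]; try ring
    have hlast : ∑ b ∈ range (m + 1), (b + 1) * (b + 2) * (m - b)
        = ∑ b ∈ range m, (b + 1) * (b + 2) * (m - b) := by
      rw [Finset.sum_range_succ]; simp
    rw [hsplit, hlast, Nat.mul_add, ih]
    have h6 := gf_L6 (m + 1)
    have h4 : 12 * ∑ b ∈ range (m + 1), (b + 1) * (b + 2)
        = 4 * ((m + 1) * (m + 1 + 1) * (m + 1 + 2)) := by omega
    rw [h4]; ring

open Finset in
private lemma gf_L4 (t : ℕ) :
    30 * ∑ b ∈ range (t + 1), (b + 1) * (b + 2) * ((t - b + 1) * (t - b + 2))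
      = (t + 1) * (t + 2) * (t + 3) * (t + 4) * (t + 5) := by
  induction t with
  | zero => simp
  | succ t ih =>
    have hsplit : ∑ b ∈ range (t + 2), (b + 1) * (b + 2) * ((t + 1 - b + 1) * (t + 1 - b + 2))
        = (∑ b ∈ range (t + 2), (b + 1) * (b + 2) * ((t + 1 - b) * (t + 2 - b)))
          + 2 * ∑ b ∈ range (t + 2), (b + 1) * (b + 2) * (t + 2 - b) := by
      rw [Finset.mul_sum, ← Finset.sum_add_distrib]
      apply Finset.sum_congr rfl
      intro b hb
      have : b < t + 2 := Finset.mem_range.mp hb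
      have e : t + 2 - b = (t + 1 - b) + 1 := by omega
      rw [e]; try ring
    have hlast : ∑ b ∈ range (t + 2), (b + 1) * (b + 2) * ((t + 1 - b) * (t + 2 - b))
        = ∑ b ∈ range (t + 1), (b + 1) * (b + 2) * ((t - b + 1) * (t - b + 2)) := by
      rw [Finset.sum_range_succ]
      simp only [Nat.sub_self, Nat.zero_mul, Nat.mul_zero, Nat.add_zero]
      apply Finset.sum_congr rfl
      intro b hb
      have : b < t + 1 := Finset.mem_range.mp hb
      have e1 : t + 1 - b = t - b + 1 := by omega
      have e2 : t + 2 - b = t - b + 2 := by omega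
      rw [e1, e2]
    rw [hsplit, hlast, Nat.mul_add, ih]
    have h5 := gf_L5 (t + 2)
    have e : 30 * (2 * ∑ b ∈ range (t + 2), (b + 1) * (b + 2) * (t + 2 - b))
        = 5 * ((t + 2) * (t + 2 + 1) * (t + 2 + 2) * (t + 2 + 3)) := by omega
    rw [e]; ring

open Finset in
private lemma gf_L3 (t : ℕ) :
    360 * ∑ b ∈ range (t + 1), ∑ c ∈ range (b + 1), ∑ d ∈ range (t - b + 1),
        (b + 1 - c) * ((t - b + 1 - d) * (c + d + 1))
      = (t + 3) * ((t + 1) * (t + 2) * (t + 3) * (t + 4) * (t + 5)) := by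
  have e1 : 360 * ∑ b ∈ range (t + 1), ∑ c ∈ range (b + 1), ∑ d ∈ range (t - b + 1),
        (b + 1 - c) * ((t - b + 1 - d) * (c + d + 1))
      = 30 * ∑ b ∈ range (t + 1), 12 * ∑ c ∈ range (b + 1), ∑ d ∈ range (t - b + 1),
        (b + 1 - c) * ((t - b + 1 - d) * (c + d + 1)) := by
    rw [Finset.mul_sum, Finset.mul_sum]
    apply Finset.sum_congr rfl
    intro b _
    ring
  have e2 : ∀ b ∈ range (t + 1), 12 * ∑ c ∈ range (b + 1), ∑ d ∈ range (t - b + 1),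
        (b + 1 - c) * ((t - b + 1 - d) * (c + d + 1))
      = (t + 3) * ((b + 1) * (b + 2) * ((t - b + 1) * (t - b + 2))) := by
    intro b hb
    have hb' : b ≤ t := by have := Finset.mem_range.mp hb; omega
    have h2 := gf_L2 b (t - b)
    rw [h2]
    have e : b + (t - b) + 3 = t + 3 := by omega
    rw [e]; ring
  rw [e1, Finset.sum_congr rfl e2, ← Finset.mul_sum]
  have h4 := gf_L4 t
  calc 30 * ((t + 3) * ∑ b ∈ range (t + 1), (b + 1) * (b + 2) * ((t - b + 1) * (t - b + 2)))
      = (t + 3) * (30 * ∑ b ∈ range (t + 1), (b + 1) * (b + 2) * ((t - b + 1) * (t - b + 2))) := by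
        ring
    _ = (t + 3) * ((t + 1) * (t + 2) * (t + 3) * (t + 4) * (t + 5)) := by rw [h4]

/-- tuple type: `b`, `c`, `d`, then `(f, g, h)` -/
private abbrev gfTup : Type := Σ _ : ℕ, Σ _ : ℕ, Σ _ : ℕ, ℕ × ℕ × ℕ

open Finset in
private def gfT (t : ℕ) : Finset gfTup :=
  (range (t + 1)).sigma fun b =>
    (range (b + 1)).sigma fun c =>
      (range (t - b + 1)).sigma fun d =>
        (range (b + 1 - c)) ×ˢ (range (t - b + 1 - d)) ×ˢ (range (c + d + 1))

private def gfPhi (t : ℕ) (x : gfTup) : Matrix (Fin 4) (Fin 4) ℕ :=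
  Matrix.of
    ![![t - x.1, x.1, 0, 0],
      ![x.2.1, x.2.2.1, t - x.2.1 - x.2.2.1, 0],
      ![x.2.2.2.1, x.2.2.2.2.1, x.2.2.2.2.2,
        t - x.2.2.2.1 - x.2.2.2.2.1 - x.2.2.2.2.2],
      ![x.1 - x.2.1 - x.2.2.2.1, t - x.1 - x.2.2.1 - x.2.2.2.2.1,
        x.2.1 + x.2.2.1 - x.2.2.2.2.2, x.2.2.2.1 + x.2.2.2.2.1 + x.2.2.2.2.2]]

private lemma gfPhi_inj (t : ℕ) : Function.Injective (gfPhi t) := by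
  rintro ⟨b, c, d, f, g, h⟩ ⟨b', c', d', f', g', h'⟩ hEq
  have e01 := congrFun (congrFun hEq 0) 1
  have e10 := congrFun (congrFun hEq 1) 0
  have e11 := congrFun (congrFun hEq 1) 1
  have e20 := congrFun (congrFun hEq 2) 0
  have e21 := congrFun (congrFun hEq 2) 1
  have e22 := congrFun (congrFun hEq 2) 2
  simp [gfPhi] at e01 e10 e11 e20 e21 e22
  subst e01; subst e10; subst e11; subst e20; subst e21; subst e22
  rfl

open Finset in
private lemma gfT_card (t : ℕ) :
    (gfT t).card = ∑ b ∈ range (t + 1), ∑ c ∈ range (b + 1), ∑ d ∈ range (t - b + 1),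
      (b + 1 - c) * ((t - b + 1 - d) * (c + d + 1)) := by
  simp [gfT, Finset.card_sigma, Finset.card_product, Finset.card_range]

set_option maxHeartbeats 2000000 in
private lemma gf_set_eq (t : ℕ) :
    {M : Matrix (Fin 4) (Fin 4) ℕ |
      (∀ i j : Fin 4, (i : ℕ) + 2 ≤ (j : ℕ) → M i j = 0) ∧
      (∀ i : Fin 4, ∑ j, M i j = t) ∧
      (∀ j : Fin 4, ∑ i, M i j = t)} = gfPhi t '' ↑(gfT t) := by
  ext M
  constructor
  · rintro ⟨hz, hrow, hcol⟩
    have h02 : M 0 2 = 0 := hz 0 2 (by decide)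
    have h03 : M 0 3 = 0 := hz 0 3 (by decide)
    have h13 : M 1 3 = 0 := hz 1 3 (by decide)
    have hr0 := hrow 0; have hr1 := hrow 1; have hr2 := hrow 2; have hr3 := hrow 3
    have hc0 := hcol 0; have hc1 := hcol 1; have hc2 := hcol 2; have hc3 := hcol 3
    rw [Fin.sum_univ_four] at hr0 hr1 hr2 hr3 hc0 hc1 hc2 hc3
    refine ⟨⟨M 0 1, M 1 0, M 1 1, (M 2 0, M 2 1, M 2 2)⟩, ?_, ?_⟩
    · simp only [Finset.mem_coe, gfT, Finset.mem_sigma, Finset.mem_product, Finset.mem_range]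
      omega
    · ext i j
      fin_cases i <;> fin_cases j <;> simp [gfPhi] <;> omega
  · rintro ⟨⟨b, c, d, f, g, h⟩, hx, rfl⟩
    simp only [Finset.mem_coe, gfT, Finset.mem_sigma, Finset.mem_product,
      Finset.mem_range] at hx
    obtain ⟨hb, hc, hd, hf, hg, hh⟩ := hx
    refine ⟨?_, ?_, ?_⟩
    · intro i j hij
      fin_cases i <;> fin_cases j <;> simp [gfPhi] at hij ⊢ <;> omega
    · intro i
      fin_cases i <;> rw [Fin.sum_univ_four] <;> simp [gfPhi] <;> omega
    · intro j
      fin_cases j <;> rw [Fin.sum_univ_four] <;> simp [gfPhi] <;> omega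

/-- For every `t ≥ 0`, `360 * g t 4 = (t+3) * ∏_{i=1}^{5} (t+i)`. -/
theorem g_four (t : ℕ) :
    360 * g t 4 = (t + 3) * ∏ i ∈ Finset.Icc 1 5, (t + i) := by
  have hprod : ∏ i ∈ Finset.Icc 1 5, (t + i)
      = (t + 1) * (t + 2) * (t + 3) * (t + 4) * (t + 5) := by
    rw [Finset.prod_Icc_succ_top (by norm_num), Finset.prod_Icc_succ_top (by norm_num),
      Finset.prod_Icc_succ_top (by norm_num), Finset.prod_Icc_succ_top (by norm_num),
      Finset.Icc_self, Finset.prod_singleton]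
  have hg : g t 4 = (gfT t).card := by
    unfold g
    rw [gf_set_eq t, Set.ncard_image_of_injective _ (gfPhi_inj t), Set.ncard_coe_finset]
  rw [hg, gfT_card, hprod]
  exact gf_L3 t
end

section
/- For every nonnegative integer t, 362880·g_t(5) = (t+3)²·∏_{i=1}^{8}(t+i); that is, the number of 5×5 matrices of nonnegative integers whose (i,j) entry is 0 whenever j ≥ i+2 and whose row and column sums all equal t is (t+3)²(t+1)(t+2)···(t+8)/362880. -/
set_option maxHeartbeats 1000000


open Finset

private def S1 (m2 m1 H : ℕ) : ℕ := ∑ I ∈ range (m1 - H + 1), (m2 - H - I + 1)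
private def S2 (m2 m1 : ℕ) : ℕ := ∑ H ∈ range (m1 + 1), S1 m2 m1 H
private def S3 (m2 m1 : ℕ) : ℕ := (m1 + 1) * S2 m2 m1
private def S4 (m2 mB : ℕ) : ℕ := ∑ E ∈ range (mB + 1), S3 m2 (mB - E)
private def S5 (m2 : ℕ) : ℕ := ∑ B ∈ range (m2 + 1), S4 m2 (m2 - B)
private def S6 (m : ℕ) : ℕ := ∑ x ∈ range (m + 1), S5 (m - x)
private def S7 (m : ℕ) : ℕ := ∑ x ∈ range (m + 1), S6 (m - x)
private def S8 (m : ℕ) : ℕ := ∑ x ∈ range (m + 1), S7 (m - x)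
private def S9 (m : ℕ) : ℕ := ∑ x ∈ range (m + 1), S8 (m - x)

private def c1 (a b x : ℚ) : ℚ := (1)*a*b + (-1)*a*x + (1)*a + (-1/2)*b^2 + (1/2)*b + (1/2)*x^2 + (-3/2)*x + (1)
private def q2 (a b x : ℚ) : ℚ := (1)*a*b*x + (1)*a*b + (-1/2)*a*x^2 + (1/2)*a*x + (1)*a + (-1/2)*b^2*x + (-1/2)*b^2 + (1/2)*b*x + (1/2)*b + (1/6)*x^3 + (-1/2)*x^2 + (1/3)*x + (1)
private def c3 (a b : ℚ) : ℚ := (1/2)*a*b^3 + (2)*a*b^2 + (5/2)*a*b + (1)*a + (-1/3)*b^4 + (-5/6)*b^3 + (1/3)*b^2 + (11/6)*b + (1)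
private def q4 (a x : ℚ) : ℚ := (1/8)*a*x^4 + (11/12)*a*x^3 + (19/8)*a*x^2 + (31/12)*a*x + (1)*a + (-1/15)*x^5 + (-3/8)*x^4 + (-5/12)*x^3 + (7/8)*x^2 + (119/60)*x + (1)
private def q5 (a x : ℚ) : ℚ := (1/40)*a*x^5 + (7/24)*a*x^4 + (31/24)*a*x^3 + (65/24)*a*x^2 + (161/60)*a*x + (1)*a + (-1/90)*x^6 + (-13/120)*x^5 + (-23/72)*x^4 + (-1/24)*x^3 + (479/360)*x^2 + (43/20)*x + (1)
private def c5 (a : ℚ) : ℚ := q5 a a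
private def q6 (x : ℚ) : ℚ := (1/504)*x^7 + (3/80)*x^6 + (211/720)*x^5 + (59/48)*x^4 + (431/144)*x^3 + (127/30)*x^2 + (1349/420)*x + (1)
private def q7 (x : ℚ) : ℚ := (1/4032)*x^8 + (2/315)*x^7 + (11/160)*x^6 + (37/90)*x^5 + (95/64)*x^4 + (149/45)*x^3 + (22411/5040)*x^2 + (229/70)*x + (1)
private def q8 (x : ℚ) : ℚ := (1/36288)*x^9 + (37/40320)*x^8 + (199/15120)*x^7 + (307/2880)*x^6 + (4637/8640)*x^5 + (10019/5760)*x^4 + (328511/90720)*x^3 + (46903/10080)*x^2 + (8389/2520)*x + (1)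
private def q9 (x : ℚ) : ℚ := (1/362880)*x^10 + (1/8640)*x^9 + (257/120960)*x^8 + (113/5040)*x^7 + (2599/17280)*x^6 + (1927/2880)*x^5 + (723869/362880)*x^4 + (16951/4320)*x^3 + (1087/224)*x^2 + (2843/840)*x + (1)

private lemma sumM (M : ℕ) : ∀ n : ℕ, ∑ I ∈ range (n+1), ((M:ℚ) + I) = (n+1)*M + n*(n+1)/2
  | 0 => by simp
  | n+1 => by rw [Finset.sum_range_succ, sumM M n]; push_cast; ring

private lemma L1 (m2 m1 H : ℕ) (h1 : H ≤ m1) (h2 : m1 ≤ m2) :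
    ((S1 m2 m1 H : ℕ) : ℚ) = c1 m2 m1 H := by
  have key : ∀ I ∈ range (m1 - H + 1), ((m2 - H - I + 1 : ℕ) : ℚ)
      = (((m2 - m1 + 1) + ((m1 - H) - I) : ℕ) : ℚ) := by
    intro I hI; rw [mem_range] at hI; congr 1; omega
  rw [S1, Nat.cast_sum, Finset.sum_congr rfl key]
  have hrefl := Finset.sum_range_reflect (fun j => (((m2 - m1 + 1) + j : ℕ) : ℚ)) (m1 - H + 1)
  simp only [Nat.add_sub_cancel] at hrefl
  rw [hrefl]
  have h := sumM (m2 - m1 + 1) (m1 - H)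
  push_cast at h ⊢
  rw [h, Nat.cast_sub h1, Nat.cast_sub h2]
  simp only [c1]; ring

private lemma G2 (a b : ℚ) : ∀ n : ℕ, (∑ H ∈ range (n+1), c1 a b (H:ℚ)) = q2 a b (n:ℚ)
  | 0 => by simp only [zero_add, Finset.sum_range_one, c1, q2]; push_cast; ring
  | n+1 => by rw [Finset.sum_range_succ, G2 a b n]; simp only [c1, q2]; push_cast; ring

private lemma L2 (m2 m1 : ℕ) (h2 : m1 ≤ m2) :
    ((S2 m2 m1 : ℕ) : ℚ) = q2 m2 m1 m1 := by
  rw [S2, Nat.cast_sum,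
    Finset.sum_congr rfl (fun H hH => L1 m2 m1 H (by rw [mem_range] at hH; omega) h2),
    G2 m2 m1 m1]

private lemma L3 (m2 m1 : ℕ) (h2 : m1 ≤ m2) :
    ((S3 m2 m1 : ℕ) : ℚ) = c3 m2 m1 := by
  rw [S3, Nat.cast_mul, L2 m2 m1 h2]
  simp only [c3, q2]; push_cast; ring

private lemma G4 (a : ℚ) : ∀ n : ℕ, (∑ x ∈ range (n+1), c3 a (x:ℚ)) = q4 a (n:ℚ)
  | 0 => by simp only [zero_add, Finset.sum_range_one, c3, q4]; push_cast; ring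
  | n+1 => by rw [Finset.sum_range_succ, G4 a n]; simp only [c3, q4]; push_cast; ring

private lemma L4 (m2 mB : ℕ) (h : mB ≤ m2) :
    ((S4 m2 mB : ℕ) : ℚ) = q4 m2 mB := by
  have hrefl := Finset.sum_range_reflect (fun E => S3 m2 E) (mB + 1)
  simp only [Nat.add_sub_cancel] at hrefl
  rw [S4, hrefl, Nat.cast_sum,
    Finset.sum_congr rfl (fun E hE => L3 m2 E (by rw [mem_range] at hE; omega)),
    G4 m2 mB]

private lemma G5 (a : ℚ) : ∀ n : ℕ, (∑ x ∈ range (n+1), q4 a (x:ℚ)) = q5 a (n:ℚ)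
  | 0 => by simp only [zero_add, Finset.sum_range_one, q4, q5]; push_cast; ring
  | n+1 => by rw [Finset.sum_range_succ, G5 a n]; simp only [q4, q5]; push_cast; ring

private lemma L5 (m2 : ℕ) : ((S5 m2 : ℕ) : ℚ) = c5 m2 := by
  have hrefl := Finset.sum_range_reflect (fun B => S4 m2 B) (m2 + 1)
  simp only [Nat.add_sub_cancel] at hrefl
  rw [S5, hrefl, Nat.cast_sum,
    Finset.sum_congr rfl (fun B hB => L4 m2 B (by rw [mem_range] at hB; omega)),
    G5 m2 m2, c5]

private lemma G6 : ∀ n : ℕ, (∑ x ∈ range (n+1), c5 (x:ℚ)) = q6 (n:ℚ)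
  | 0 => by simp only [zero_add, Finset.sum_range_one, c5, q5, q6]; push_cast; ring
  | n+1 => by rw [Finset.sum_range_succ, G6 n]; simp only [c5, q5, q6]; push_cast; ring

private lemma L6 (m : ℕ) : ((S6 m : ℕ) : ℚ) = q6 m := by
  have hrefl := Finset.sum_range_reflect (fun x => S5 x) (m + 1)
  simp only [Nat.add_sub_cancel] at hrefl
  rw [S6, hrefl, Nat.cast_sum, Finset.sum_congr rfl (fun x _ => L5 x), G6 m]

private lemma G7 : ∀ n : ℕ, (∑ x ∈ range (n+1), q6 (x:ℚ)) = q7 (n:ℚ)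
  | 0 => by simp only [zero_add, Finset.sum_range_one, q6, q7]; push_cast; ring
  | n+1 => by rw [Finset.sum_range_succ, G7 n]; simp only [q6, q7]; push_cast; ring

private lemma L7 (m : ℕ) : ((S7 m : ℕ) : ℚ) = q7 m := by
  have hrefl := Finset.sum_range_reflect (fun x => S6 x) (m + 1)
  simp only [Nat.add_sub_cancel] at hrefl
  rw [S7, hrefl, Nat.cast_sum, Finset.sum_congr rfl (fun x _ => L6 x), G7 m]

private lemma G8 : ∀ n : ℕ, (∑ x ∈ range (n+1), q7 (x:ℚ)) = q8 (n:ℚ)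
  | 0 => by simp only [zero_add, Finset.sum_range_one, q7, q8]; push_cast; ring
  | n+1 => by rw [Finset.sum_range_succ, G8 n]; simp only [q7, q8]; push_cast; ring

private lemma L8 (m : ℕ) : ((S8 m : ℕ) : ℚ) = q8 m := by
  have hrefl := Finset.sum_range_reflect (fun x => S7 x) (m + 1)
  simp only [Nat.add_sub_cancel] at hrefl
  rw [S8, hrefl, Nat.cast_sum, Finset.sum_congr rfl (fun x _ => L7 x), G8 m]

private lemma G9 : ∀ n : ℕ, (∑ x ∈ range (n+1), q8 (x:ℚ)) = q9 (n:ℚ)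
  | 0 => by simp only [zero_add, Finset.sum_range_one, q8, q9]; push_cast; ring
  | n+1 => by rw [Finset.sum_range_succ, G9 n]; simp only [q8, q9]; push_cast; ring

private lemma L9 (m : ℕ) : ((S9 m : ℕ) : ℚ) = q9 m := by
  have hrefl := Finset.sum_range_reflect (fun x => S8 x) (m + 1)
  simp only [Nat.add_sub_cancel] at hrefl
  rw [S9, hrefl, Nat.cast_sum, Finset.sum_congr rfl (fun x _ => L8 x), G9 m]

private lemma final (t : ℕ) :
    (362880 : ℚ) * S9 t
      = ((t:ℚ) + 3) ^ 2 * ∏ i ∈ Finset.Icc (1:ℕ) 8, ((t:ℚ) + (i:ℚ)) := by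
  rw [L9]
  rw [show Finset.Icc (1:ℕ) 8 = ({1,2,3,4,5,6,7,8} : Finset ℕ) from rfl]
  rw [Finset.prod_insert (by decide), Finset.prod_insert (by decide),
    Finset.prod_insert (by decide), Finset.prod_insert (by decide),
    Finset.prod_insert (by decide), Finset.prod_insert (by decide),
    Finset.prod_insert (by decide), Finset.prod_singleton]
  simp only [q9]
  push_cast
  ring

private abbrev Tup : Type :=
  Σ _ : ℕ, Σ _ : ℕ, Σ _ : ℕ, Σ _ : ℕ, Σ _ : ℕ, Σ _ : ℕ, Σ _ : ℕ, Σ _ : ℕ, Σ _ : ℕ, ℕ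

private def Tow (t : ℕ) : Finset Tup :=
  (range (t + 1)).sigma fun C =>
  (range (t - C + 1)).sigma fun D =>
  (range (t - C - D + 1)).sigma fun F =>
  (range (t - C - D - F + 1)).sigma fun G =>
  (range (t - C - D - F - G + 1)).sigma fun B =>
  (range (t - C - D - F - G - B + 1)).sigma fun E =>
  (range (t - C - D - F - G - B - E + 1)).sigma fun _A =>
  (range (t - C - D - F - G - B - E + 1)).sigma fun H =>
  (range (t - C - D - F - G - B - E - H + 1)).sigma fun I =>
  range (t - C - D - F - G - H - I + 1)

private lemma cardTow (t : ℕ) : (Tow t).card = S9 t := by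
  simp only [Tow, Finset.card_sigma, Finset.card_range, Finset.sum_const, smul_eq_mul,
    S9, S8, S7, S6, S5, S4, S3, S2, S1]

private def phi (t : ℕ) : Tup → Matrix (Fin 5) (Fin 5) ℕ :=
  fun ⟨C, D, F, G, B, E, A, H, I, J⟩ =>
    Matrix.of ![![t - (A+B+C+D), A+B+C+D, 0, 0, 0],
      ![A, t - (A+B+C+D+E+F+G), B+C+D+E+F+G, 0, 0],
      ![B, E, t - (B+C+D+E+F+G+H+I), C+D+F+G+H+I, 0],
      ![C, F, H, t - (C+D+F+G+H+I+J), D+G+I+J],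
      ![D, G, I, J, t - (D+G+I+J)]]

private lemma set_eq (t : ℕ) :
    {M : Matrix (Fin 5) (Fin 5) ℕ |
      (∀ i j : Fin 5, (i : ℕ) + 2 ≤ (j : ℕ) → M i j = 0) ∧
      (∀ i : Fin 5, ∑ j, M i j = t) ∧
      (∀ j : Fin 5, ∑ i, M i j = t)} = phi t '' ↑(Tow t) := by
  ext M
  constructor
  · rintro ⟨hz, hrow, hcol⟩
    have z02 := hz 0 2 (by decide)
    have z03 := hz 0 3 (by decide)
    have z04 := hz 0 4 (by decide)
    have z13 := hz 1 3 (by decide)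
    have z14 := hz 1 4 (by decide)
    have z24 := hz 2 4 (by decide)
    have r0 := hrow 0; have r1 := hrow 1; have r2 := hrow 2
    have r3 := hrow 3; have r4 := hrow 4
    have c0 := hcol 0; have c1 := hcol 1; have c2 := hcol 2
    have c3 := hcol 3; have c4 := hcol 4
    rw [Fin.sum_univ_five] at r0 r1 r2 r3 r4 c0 c1 c2 c3 c4
    refine ⟨⟨M 3 0, M 4 0, M 3 1, M 4 1, M 2 0, M 2 1, M 1 0, M 3 2, M 4 2, M 4 3⟩, ?_, ?_⟩
    · simp only [Tow, Finset.mem_coe, Finset.mem_sigma, Finset.mem_range]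
      refine ⟨?_, ?_, ?_, ?_, ?_, ?_, ?_, ?_, ?_, ?_⟩ <;> omega
    · ext i j
      fin_cases i <;> fin_cases j <;>
        simp only [Fin.zero_eta, Fin.mk_one, Fin.reduceFinMk, phi, Matrix.of_apply,
          Matrix.cons_val_zero, Matrix.cons_val_one,
          Matrix.cons_val_two, Matrix.cons_val_three, Matrix.cons_val_four,
          Matrix.head_cons, Matrix.tail_cons] <;>
        omega
  · rintro ⟨⟨C, D, F, G, B, E, A, H, I, J⟩, hp, rfl⟩
    simp only [Tow, Finset.mem_coe, Finset.mem_sigma, Finset.mem_range] at hp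
    obtain ⟨h1, h2, h3, h4, h5, h6, h7, h8, h9, h10⟩ := hp
    refine ⟨?_, ?_, ?_⟩
    · intro i j hij
      fin_cases i <;> fin_cases j <;>
        first
          | rfl
          | exact absurd hij (by decide)
    · intro i
      fin_cases i <;>
        (rw [Fin.sum_univ_five];
         simp only [Fin.zero_eta, Fin.mk_one, Fin.reduceFinMk, phi, Matrix.of_apply,
          Matrix.cons_val_zero, Matrix.cons_val_one,
          Matrix.cons_val_two, Matrix.cons_val_three, Matrix.cons_val_four,
          Matrix.head_cons, Matrix.tail_cons]) <;>
        omega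
    · intro j
      fin_cases j <;>
        (rw [Fin.sum_univ_five];
         simp only [Fin.zero_eta, Fin.mk_one, Fin.reduceFinMk, phi, Matrix.of_apply,
          Matrix.cons_val_zero, Matrix.cons_val_one,
          Matrix.cons_val_two, Matrix.cons_val_three, Matrix.cons_val_four,
          Matrix.head_cons, Matrix.tail_cons]) <;>
        omega

private lemma phi_inj (t : ℕ) : Set.InjOn (phi t) ↑(Tow t) := by
  rintro ⟨C, D, F, G, B, E, A, H, I, J⟩ _ ⟨C', D', F', G', B', E', A', H', I', J'⟩ _ h
  have e : ∀ i j : Fin 5, phi t ⟨C, D, F, G, B, E, A, H, I, J⟩ i j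
      = phi t ⟨C', D', F', G', B', E', A', H', I', J'⟩ i j := fun i j => by rw [h]
  have e30 := e 3 0; have e40 := e 4 0; have e31 := e 3 1; have e41 := e 4 1
  have e20 := e 2 0; have e21 := e 2 1; have e10 := e 1 0; have e32 := e 3 2
  have e42 := e 4 2; have e43 := e 4 3
  simp only [phi, Matrix.of_apply, Matrix.cons_val_zero, Matrix.cons_val_one,
    Matrix.cons_val_two, Matrix.cons_val_three, Matrix.cons_val_four,
    Matrix.head_cons, Matrix.tail_cons]
    at e30 e40 e31 e41 e20 e21 e10 e32 e42 e43
  subst e30 e40 e31 e41 e20 e21 e10 e32 e42 e43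
  rfl

private lemma g_eq (t : ℕ) : g t 5 = S9 t := by
  rw [g, set_eq, Set.ncard_image_of_injOn (phi_inj t), Set.ncard_coe_finset, cardTow]

/-- For every `t ≥ 0`, `362880 * g t 5 = (t+3)^2 * ∏_{i=1}^{8} (t+i)`. -/
theorem g_five (t : ℕ) :
    362880 * g t 5 = (t + 3) ^ 2 * ∏ i ∈ Finset.Icc 1 8, (t + i) := by
  rw [g_eq]
  apply Nat.cast_injective (R := ℚ)
  push_cast
  exact final t
end
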